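/- arXiv:2308.01579 — 2 statements merged into one kernel-verified Lean document; each statement's English description precedes it below -/
import Mathlib

section
/- Let p be an odd prime, 𝒞 ⊆ (ℤ/p)^{2n} a linear code self-dual with respect to η, χ := √p·1_{2n} ∈ Λ(𝒞), and Λ₀ := {λ ∈ Λ(𝒞) : χ ⊙ λ ∈ 2ℤ}, Λ₁ := {λ ∈ Λ(𝒞) : χ ⊙ λ ∈ 2ℤ+1} (χ ⊙ λ ∈ ℤ for all λ ∈ Λ(𝒞)). Then for every τ in the upper half-plane: Θ_{Λ₀}(τ) = ½[W_𝒞({ψ⁺_{ab}}) + W_𝒞({ψ⁻_{ab}})] and Θ_{Λ₁}(τ) = ½[W_𝒞({ψ⁺_{ab}}) − W_𝒞({ψ⁻_{ab}})], where, writing ã, b̃ ∈ {0,…,p−1} for the lifts of a, b ∈ ℤ/p, ψ⁺_{ab} := Θ_{ã+b̃,p}Θ̄_{ã−b̃,p} + Θ_{ã+b̃−p,p}Θ̄_{ã−b̃−p,p} and ψ⁻_{ab} := (−1)^{ã+b̃}(Θ_{ã+b̃,p}Θ̄_{ã−b̃,p} − Θ_{ã+b̃−p,p}Θ̄_{ã−b̃−p,p}).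 -/
noncomputable section
open scoped BigOperators

/-- The Lorentzian inner product `x ⊙ y = Σᵢ (xᵢ y_{n+i} + x_{n+i} yᵢ)` on `ℝ^{2n}`,
with coordinates indexed by `Fin n ⊕ Fin n` (metric `η = [[0,Iₙ],[Iₙ,0]]`). -/
def lorR {n : ℕ} (x y : Fin n ⊕ Fin n → ℝ) : ℝ :=
  ∑ i : Fin n, (x (Sum.inl i) * y (Sum.inr i) + x (Sum.inr i) * y (Sum.inl i))

/-- The Lorentzian inner product on `(ℤ/p)^{2n}`. -/
def lorZmod {n p : ℕ} (x y : Fin n ⊕ Fin n → ZMod p) : ZMod p :=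
  ∑ i : Fin n, (x (Sum.inl i) * y (Sum.inr i) + x (Sum.inr i) * y (Sum.inl i))

/-- The componentwise lift of a codeword in `(ℤ/p)^{2n}` to `{0,…,p−1}^{2n} ⊆ ℝ^{2n}`. -/
def liftR {n p : ℕ} (c : Fin n ⊕ Fin n → ZMod p) : Fin n ⊕ Fin n → ℝ :=
  fun i => ((c i).val : ℝ)

/-- The Construction A lattice `Λ(𝒞) = {(c̃ + p·m)/√p : c ∈ 𝒞, m ∈ ℤ^{2n}} ⊆ ℝ^{2n}`. -/
def constrA {n : ℕ} (p : ℕ) (C : Set (Fin n ⊕ Fin n → ZMod p)) : Set (Fin n ⊕ Fin n → ℝ) :=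
  {x | ∃ c ∈ C, ∃ m : Fin n ⊕ Fin n → ℤ, x = fun i => (liftR c i + p * m i) / Real.sqrt p}

/-- The dual `L* = {x : x ⊙ l ∈ ℤ for all l ∈ L}` with respect to the Lorentzian
inner product. -/
def dualLor {n : ℕ} (L : Set (Fin n ⊕ Fin n → ℝ)) : Set (Fin n ⊕ Fin n → ℝ) :=
  {x | ∀ l ∈ L, ∃ k : ℤ, lorR x l = (k : ℝ)}

/-- `q^x := e^{2πiτx}` for real `x`. -/
def qpow (τ : ℂ) (x : ℝ) : ℂ := Complex.exp (2 * Real.pi * Complex.I * τ * x)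

/-- `q̄^x := e^{−2πi·conj(τ)·x}` for real `x`. -/
def qbarpow (τ : ℂ) (x : ℝ) : ℂ :=
  Complex.exp (-(2 * Real.pi * Complex.I) * (starRingEnd ℂ τ) * x)

/-- The theta function `Θ_S(τ) = Σ_{λ∈S} q^{|λ₁+λ₂|²/4} q̄^{|λ₁−λ₂|²/4}` of a subset
`S ⊆ ℝ^{2n}`, where `λ = (λ₁, λ₂)`. -/
def thetaSet {n : ℕ} (S : Set (Fin n ⊕ Fin n → ℝ)) (τ : ℂ) : ℂ :=
  ∑' l : S,
    qpow τ ((∑ i : Fin n, (l.1 (Sum.inl i) + l.1 (Sum.inr i)) ^ 2) / 4) *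
      qbarpow τ ((∑ i : Fin n, (l.1 (Sum.inl i) - l.1 (Sum.inr i)) ^ 2) / 4)

/-- The complete weight enumerator `W_𝒞({x_{ab}}) = Σ_{(α,β)∈𝒞} Πᵢ x_{αᵢβᵢ}` of a code
`𝒞 ⊆ (ℤ/p)^{2n}`, evaluated on a family of complex numbers `x`. -/
def cwe {n p : ℕ} (C : Set (Fin n ⊕ Fin n → ZMod p)) (x : ZMod p → ZMod p → ℂ) : ℂ :=
  ∑' c : C, ∏ i : Fin n, x (c.1 (Sum.inl i)) (c.1 (Sum.inr i))

/-- The theta function `Θ_{m,k}(τ) = Σ_{n∈ℤ} q^{k(n+m/(2k))²}`. -/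
def thetaMK (m : ℤ) (k : ℕ) (τ : ℂ) : ℂ :=
  ∑' j : ℤ, qpow τ ((k : ℝ) * ((j : ℝ) + (m : ℝ) / (2 * (k : ℝ))) ^ 2)

/-- The conjugate theta function `Θ̄_{m,k}(τ) = Σ_{n∈ℤ} q̄^{k(n+m/(2k))²}`. -/
def thetaMKbar (m : ℤ) (k : ℕ) (τ : ℂ) : ℂ :=
  ∑' j : ℤ, qbarpow τ ((k : ℝ) * ((j : ℝ) + (m : ℝ) / (2 * (k : ℝ))) ^ 2)

/-- `Λ₀ = {λ ∈ L : χ ⊙ λ ∈ 2ℤ}`. -/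
def lam0 {n : ℕ} (L : Set (Fin n ⊕ Fin n → ℝ)) (χ : Fin n ⊕ Fin n → ℝ) :
    Set (Fin n ⊕ Fin n → ℝ) :=
  {l ∈ L | ∃ k : ℤ, lorR χ l = 2 * (k : ℝ)}

/-- `Λ₁ = {λ ∈ L : χ ⊙ λ ∈ 2ℤ+1}`. -/
def lam1 {n : ℕ} (L : Set (Fin n ⊕ Fin n → ℝ)) (χ : Fin n ⊕ Fin n → ℝ) :
    Set (Fin n ⊕ Fin n → ℝ) :=
  {l ∈ L | ∃ k : ℤ, lorR χ l = 2 * (k : ℝ) + 1}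

/-- The shift `S + v` of a subset `S ⊆ ℝ^{2n}` by the vector `v`. -/
def shiftSet {n : ℕ} (S : Set (Fin n ⊕ Fin n → ℝ)) (v : Fin n ⊕ Fin n → ℝ) :
    Set (Fin n ⊕ Fin n → ℝ) :=
  (· + v) '' S

/-- `ψ⁺_{ab} = Θ_{ã+b̃,p}Θ̄_{ã−b̃,p} + Θ_{ã+b̃−p,p}Θ̄_{ã−b̃−p,p}`. -/
def psiP {p : ℕ} (a b : ZMod p) (τ : ℂ) : ℂ :=
  thetaMK ((a.val : ℤ) + (b.val : ℤ)) p τ * thetaMKbar ((a.val : ℤ) - (b.val : ℤ)) p τ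
    + thetaMK ((a.val : ℤ) + (b.val : ℤ) - p) p τ
        * thetaMKbar ((a.val : ℤ) - (b.val : ℤ) - p) p τ

/-- `ψ⁻_{ab} = (−1)^{ã+b̃}(Θ_{ã+b̃,p}Θ̄_{ã−b̃,p} − Θ_{ã+b̃−p,p}Θ̄_{ã−b̃−p,p})`. -/
def psiM {p : ℕ} (a b : ZMod p) (τ : ℂ) : ℂ :=
  (-1 : ℂ) ^ (a.val + b.val) *
    (thetaMK ((a.val : ℤ) + (b.val : ℤ)) p τ * thetaMKbar ((a.val : ℤ) - (b.val : ℤ)) p τ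
      - thetaMK ((a.val : ℤ) + (b.val : ℤ) - p) p τ
          * thetaMKbar ((a.val : ℤ) - (b.val : ℤ) - p) p τ)


set_option maxHeartbeats 1000000
section Statement14Proof
namespace Statement14Proof

lemma qbarpow_eq_conj (τ : ℂ) (x : ℝ) : qbarpow τ x = starRingEnd ℂ (qpow τ x) := by
  rw [qpow, qbarpow, ← Complex.exp_conj]
  congr 1
  simp only [map_mul, Complex.conj_I, Complex.conj_ofReal, map_ofNat]
  ring

lemma qpow_add (τ : ℂ) (x y : ℝ) : qpow τ (x + y) = qpow τ x * qpow τ y := by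
  rw [qpow, qpow, qpow, ← Complex.exp_add]
  congr 1
  push_cast
  ring

lemma norm_qpow (τ : ℂ) (x : ℝ) : ‖qpow τ x‖ = Real.exp (-(2 * Real.pi * τ.im) * x) := by
  rw [qpow, Complex.norm_exp]
  congr 1
  simp [Complex.mul_re, Complex.mul_im]

lemma norm_qbarpow (τ : ℂ) (x : ℝ) : ‖qbarpow τ x‖ = Real.exp (-(2 * Real.pi * τ.im) * x) := by
  rw [qbarpow_eq_conj, Complex.norm_conj, norm_qpow]

lemma qpow_sum (τ : ℂ) {ι : Type*} (s : Finset ι) (g : ι → ℝ) :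
    qpow τ (∑ i ∈ s, g i) = ∏ i ∈ s, qpow τ (g i) := by
  simp only [qpow, ← Complex.exp_sum]
  congr 1
  push_cast
  rw [Finset.mul_sum]

lemma qbarpow_sum (τ : ℂ) {ι : Type*} (s : Finset ι) (g : ι → ℝ) :
    qbarpow τ (∑ i ∈ s, g i) = ∏ i ∈ s, qbarpow τ (g i) := by
  simp only [qbarpow_eq_conj, ← map_prod, ← qpow_sum]

lemma qpow_sq_eq (τ : ℂ) (k c : ℝ) (j : ℤ) :
    qpow τ (k * ((j : ℝ) + c) ^ 2) = jacobiTheta₂_term j (2 * k * c * τ) (2 * k * τ) * qpow τ (k * c ^ 2) := by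
  rw [qpow, qpow, jacobiTheta₂_term, ← Complex.exp_add]
  congr 1
  push_cast
  ring

lemma summable_qpow_sq {τ : ℂ} (hτ : 0 < τ.im) {k : ℝ} (hk : 0 < k) (c : ℝ) :
    Summable fun j : ℤ => qpow τ (k * ((j : ℝ) + c) ^ 2) := by
  have h : Summable fun j : ℤ => jacobiTheta₂_term j (2 * k * c * τ) (2 * k * τ) := by
    rw [summable_jacobiTheta₂_term_iff]
    have : ((2 * k : ℝ) : ℂ) * τ = 2 * (k : ℝ) * τ := by push_cast; ring
    rw [← this, Complex.im_ofReal_mul]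
    positivity
  exact (h.mul_right (qpow τ (k * c ^ 2))).congr fun j => (qpow_sq_eq τ k c j).symm

lemma summable_norm_qpow_sq {τ : ℂ} (hτ : 0 < τ.im) {k : ℝ} (hk : 0 < k) (c : ℝ) :
    Summable fun j : ℤ => ‖qpow τ (k * ((j : ℝ) + c) ^ 2)‖ :=
  summable_norm_iff.mpr (summable_qpow_sq hτ hk c)

lemma summable_qbarpow_sq {τ : ℂ} (hτ : 0 < τ.im) {k : ℝ} (hk : 0 < k) (c : ℝ) :
    Summable fun j : ℤ => qbarpow τ (k * ((j : ℝ) + c) ^ 2) := by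
  simp only [qbarpow_eq_conj]
  exact (Complex.conjCLE : ℂ ≃L[ℝ] ℂ).summable.mpr (summable_qpow_sq hτ hk c)

lemma summable_norm_qbarpow_sq {τ : ℂ} (hτ : 0 < τ.im) {k : ℝ} (hk : 0 < k) (c : ℝ) :
    Summable fun j : ℤ => ‖qbarpow τ (k * ((j : ℝ) + c) ^ 2)‖ := by
  simp only [norm_qbarpow, ← norm_qpow]
  exact summable_norm_qpow_sq hτ hk c

/-- The per-coordinate function on `ℤ × ℤ`. -/
def Gfun (τ : ℂ) (p : ℕ) (u v : ℤ) (z : ℤ × ℤ) : ℂ :=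
  qpow τ (((u : ℝ) + p * ((z.1 : ℝ) + (z.2 : ℝ))) ^ 2 / (4 * p)) *
    qbarpow τ (((v : ℝ) + p * ((z.1 : ℝ) - (z.2 : ℝ))) ^ 2 / (4 * p))

/-- The even-parity set. -/
def evenSet : Set (ℤ × ℤ) := {z | Even (z.1 + z.2)}

def evenEquiv : ℤ × ℤ ≃ evenSet where
  toFun z := ⟨(z.1 + z.2, z.1 - z.2), ⟨z.1, by dsimp; ring⟩⟩
  invFun z := ((z.1.1 + z.1.2) / 2, (z.1.1 - z.1.2) / 2)
  left_inv z := by obtain ⟨a, b⟩ := z; simp only; ext <;> (simp only; omega)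
  right_inv z := by
    obtain ⟨⟨a, b⟩, k, hk⟩ := z
    apply Subtype.ext
    simp only at hk ⊢
    ext <;> (simp only; omega)

def oddEquiv : ℤ × ℤ ≃ (evenSetᶜ : Set (ℤ × ℤ)) where
  toFun z := ⟨(z.1 + z.2 - 1, z.1 - z.2), by
    simp only [evenSet, Set.mem_compl_iff, Set.mem_setOf_eq]
    rintro ⟨k, hk⟩; omega⟩
  invFun z := ((z.1.1 + z.1.2 + 1) / 2, (z.1.1 - z.1.2 + 1) / 2)
  left_inv z := by obtain ⟨a, b⟩ := z; simp only; ext <;> (simp only; omega)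
  right_inv z := by
    obtain ⟨⟨a, b⟩, hk⟩ := z
    simp only [evenSet, Set.mem_compl_iff, Set.mem_setOf_eq, Int.even_iff] at hk
    apply Subtype.ext
    simp only
    ext <;> (simp only; omega)

section main
variable {τ : ℂ} {p : ℕ}

lemma Gfun_even (hp : 0 < p) (u v j j' : ℤ) :
    Gfun τ p u v (j + j', j - j') =
      qpow τ ((p : ℝ) * ((j : ℝ) + (u : ℝ) / (2 * p)) ^ 2) *
        qbarpow τ ((p : ℝ) * ((j' : ℝ) + (v : ℝ) / (2 * p)) ^ 2) := by
  have hp' : (p : ℝ) ≠ 0 := Nat.cast_ne_zero.mpr hp.ne'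
  rw [Gfun]
  congr 1 <;> · congr 1; push_cast; field_simp; ring

lemma Gfun_odd (hp : 0 < p) (u v j j' : ℤ) :
    Gfun τ p u v (j + j' - 1, j - j') =
      qpow τ ((p : ℝ) * ((j : ℝ) + ((u - p : ℤ) : ℝ) / (2 * p)) ^ 2) *
        qbarpow τ ((p : ℝ) * ((j' : ℝ) + ((v - p : ℤ) : ℝ) / (2 * p)) ^ 2) := by
  have hp' : (p : ℝ) ≠ 0 := Nat.cast_ne_zero.mpr hp.ne'
  rw [Gfun]
  congr 1 <;> · congr 1; push_cast; field_simp; ring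

lemma summable_thetaMK_term (hτ : 0 < τ.im) (hp : 0 < p) (u : ℤ) : Summable fun j : ℤ =>
    qpow τ ((p : ℝ) * ((j : ℝ) + (u : ℝ) / (2 * p)) ^ 2) :=
  summable_qpow_sq hτ (by positivity) _

lemma summable_thetaMKbar_term (hτ : 0 < τ.im) (hp : 0 < p) (u : ℤ) : Summable fun j : ℤ =>
    qbarpow τ ((p : ℝ) * ((j : ℝ) + (u : ℝ) / (2 * p)) ^ 2) :=
  summable_qbarpow_sq hτ (by positivity) _

lemma summable_even_part (hτ : 0 < τ.im) (hp : 0 < p) (u v : ℤ) : Summable fun z : ℤ × ℤ => Gfun τ p u v (evenEquiv z : ℤ × ℤ) := by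
  have := summable_mul_of_summable_norm (f := fun j : ℤ =>
      qpow τ ((p : ℝ) * ((j : ℝ) + (u : ℝ) / (2 * p)) ^ 2))
    (g := fun j : ℤ => qbarpow τ ((p : ℝ) * ((j : ℝ) + (v : ℝ) / (2 * p)) ^ 2))
    (summable_norm_qpow_sq hτ (by positivity) _) (summable_norm_qbarpow_sq hτ (by positivity) _)
  exact this.congr fun z => (Gfun_even hp u v z.1 z.2).symm

lemma summable_odd_part (hτ : 0 < τ.im) (hp : 0 < p) (u v : ℤ) : Summable fun z : ℤ × ℤ => Gfun τ p u v (oddEquiv z : ℤ × ℤ) := by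
  have := summable_mul_of_summable_norm (f := fun j : ℤ =>
      qpow τ ((p : ℝ) * ((j : ℝ) + ((u - p : ℤ) : ℝ) / (2 * p)) ^ 2))
    (g := fun j : ℤ => qbarpow τ ((p : ℝ) * ((j : ℝ) + ((v - p : ℤ) : ℝ) / (2 * p)) ^ 2))
    (summable_norm_qpow_sq hτ (by positivity) _) (summable_norm_qbarpow_sq hτ (by positivity) _)
  exact this.congr fun z => (Gfun_odd hp u v z.1 z.2).symm

lemma summable_Gfun (hτ : 0 < τ.im) (hp : 0 < p) (u v : ℤ) : Summable (Gfun τ p u v) := by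
  have h0 : Summable ((Gfun τ p u v) ∘ ((↑) : evenSet → ℤ × ℤ)) :=
    evenEquiv.summable_iff.mp (summable_even_part hτ hp u v)
  have h1 : Summable ((Gfun τ p u v) ∘ ((↑) : (evenSetᶜ : Set (ℤ × ℤ)) → ℤ × ℤ)) :=
    oddEquiv.summable_iff.mp (summable_odd_part hτ hp u v)
  exact h0.add_compl h1

lemma tsum_Gfun (hτ : 0 < τ.im) (hp : 0 < p) (u v : ℤ) : ∑' z : ℤ × ℤ, Gfun τ p u v z =
    thetaMK u p τ * thetaMKbar v p τ + thetaMK (u - p) p τ * thetaMKbar (v - p) p τ := by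
  rw [← Summable.tsum_subtype_add_tsum_subtype_compl (summable_Gfun hτ hp u v) evenSet]
  congr 1
  · rw [← evenEquiv.tsum_eq (fun z : evenSet => Gfun τ p u v z)]
    rw [show (fun z : ℤ × ℤ => Gfun τ p u v (evenEquiv z : ℤ × ℤ)) = fun z : ℤ × ℤ =>
        qpow τ ((p : ℝ) * ((z.1 : ℝ) + (u : ℝ) / (2 * p)) ^ 2) *
          qbarpow τ ((p : ℝ) * ((z.2 : ℝ) + (v : ℝ) / (2 * p)) ^ 2)
      from funext fun z => Gfun_even hp u v z.1 z.2]
    exact (tsum_mul_tsum_of_summable_norm (summable_norm_qpow_sq hτ (by positivity) _)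
      (summable_norm_qbarpow_sq hτ (by positivity) _)).symm
  · rw [← oddEquiv.tsum_eq (fun z : (evenSetᶜ : Set (ℤ × ℤ)) => Gfun τ p u v z)]
    rw [show (fun z : ℤ × ℤ => Gfun τ p u v (oddEquiv z : ℤ × ℤ)) = fun z : ℤ × ℤ =>
        qpow τ ((p : ℝ) * ((z.1 : ℝ) + ((u - p : ℤ) : ℝ) / (2 * p)) ^ 2) *
          qbarpow τ ((p : ℝ) * ((z.2 : ℝ) + ((v - p : ℤ) : ℝ) / (2 * p)) ^ 2)
      from funext fun z => Gfun_odd hp u v z.1 z.2]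
    exact (tsum_mul_tsum_of_summable_norm (summable_norm_qpow_sq hτ (by positivity) _)
      (summable_norm_qbarpow_sq hτ (by positivity) _)).symm

end main

section signed
variable {τ : ℂ} {p : ℕ}

/-- The sign `(-1)^m` for `m : ℤ`. -/
def sgn (m : ℤ) : ℂ := (-1 : ℂ) ^ m

lemma sgn_add (a b : ℤ) : sgn (a + b) = sgn a * sgn b :=
  zpow_add₀ (by norm_num) a b

lemma sgn_two_mul (k : ℤ) : sgn (2 * k) = 1 := by
  rw [sgn, zpow_mul]; norm_num

lemma norm_sgn (m : ℤ) : ‖sgn m‖ = 1 := by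
  rw [sgn, norm_zpow]; norm_num

lemma sgn_even {m : ℤ} (h : Even m) : sgn m = 1 := by
  obtain ⟨k, hk⟩ := h
  rw [show m = 2 * k by omega, sgn_two_mul]

lemma sgn_odd {m : ℤ} (h : Odd m) : sgn m = -1 := by
  obtain ⟨k, hk⟩ := h
  rw [hk, sgn_add, sgn_two_mul, one_mul, sgn, zpow_one]

lemma sgn_natCast_odd {q : ℕ} (h : Odd q) : sgn (q : ℤ) = -1 :=
  sgn_odd (by exact_mod_cast h)

lemma summable_Gfun_signed (hτ : 0 < τ.im) (hp : 0 < p) (u v : ℤ) :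
    Summable fun z : ℤ × ℤ => sgn (u + p * (z.1 + z.2)) * Gfun τ p u v z := by
  apply Summable.of_norm
  have : Summable fun z : ℤ × ℤ => ‖Gfun τ p u v z‖ :=
    summable_norm_iff.mpr (summable_Gfun hτ hp u v)
  exact this.congr fun z => by rw [norm_mul, norm_sgn, one_mul]

lemma tsum_Gfun_signed (hτ : 0 < τ.im) (hp : 0 < p) (hodd : Odd p) (u v : ℤ) :
    ∑' z : ℤ × ℤ, sgn (u + p * (z.1 + z.2)) * Gfun τ p u v z =
      sgn u * (thetaMK u p τ * thetaMKbar v p τ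
        - thetaMK (u - p) p τ * thetaMKbar (v - p) p τ) := by
  have hsgn_neg_p : sgn (-(p : ℤ)) = -1 :=
    sgn_odd (Odd.neg (by exact_mod_cast hodd))
  rw [← Summable.tsum_subtype_add_tsum_subtype_compl (summable_Gfun_signed hτ hp u v) evenSet]
  have heven : ∀ j j' : ℤ,
      sgn (u + p * ((j + j') + (j - j'))) * Gfun τ p u v (j + j', j - j') =
        sgn u * (qpow τ ((p : ℝ) * ((j : ℝ) + (u : ℝ) / (2 * p)) ^ 2) *
          qbarpow τ ((p : ℝ) * ((j' : ℝ) + (v : ℝ) / (2 * p)) ^ 2)) := by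
    intro j j'
    rw [show u + p * ((j + j') + (j - j')) = u + 2 * ((p : ℤ) * j) by ring, sgn_add,
      sgn_two_mul, mul_one, Gfun_even hp u v j j']
  have hodd' : ∀ j j' : ℤ,
      sgn (u + p * ((j + j' - 1) + (j - j'))) * Gfun τ p u v (j + j' - 1, j - j') =
        (- sgn u) * (qpow τ ((p : ℝ) * ((j : ℝ) + ((u - p : ℤ) : ℝ) / (2 * p)) ^ 2) *
          qbarpow τ ((p : ℝ) * ((j' : ℝ) + ((v - p : ℤ) : ℝ) / (2 * p)) ^ 2)) := by
    intro j j'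
    rw [show u + p * ((j + j' - 1) + (j - j')) = (u + -(p : ℤ)) + 2 * ((p : ℤ) * j) by ring,
      sgn_add, sgn_two_mul, mul_one, sgn_add, hsgn_neg_p, Gfun_odd hp u v j j']
    ring
  have t0 : (∑' z : evenSet, sgn (u + p * ((z : ℤ × ℤ).1 + (z : ℤ × ℤ).2)) * Gfun τ p u v z) =
      sgn u * (thetaMK u p τ * thetaMKbar v p τ) := by
    rw [← evenEquiv.tsum_eq
      (fun z : evenSet => sgn (u + p * ((z : ℤ × ℤ).1 + (z : ℤ × ℤ).2)) * Gfun τ p u v z)]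
    rw [show (fun z : ℤ × ℤ => sgn (u + p * (((evenEquiv z : ℤ × ℤ)).1 +
        ((evenEquiv z : ℤ × ℤ)).2)) * Gfun τ p u v (evenEquiv z : ℤ × ℤ)) = fun z : ℤ × ℤ =>
        sgn u * (qpow τ ((p : ℝ) * ((z.1 : ℝ) + (u : ℝ) / (2 * p)) ^ 2) *
          qbarpow τ ((p : ℝ) * ((z.2 : ℝ) + (v : ℝ) / (2 * p)) ^ 2))
      from funext fun z => heven z.1 z.2]
    rw [tsum_mul_left]
    congr 1
    exact (tsum_mul_tsum_of_summable_norm (summable_norm_qpow_sq hτ (by positivity) _)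
      (summable_norm_qbarpow_sq hτ (by positivity) _)).symm
  have t1 : (∑' z : (evenSetᶜ : Set (ℤ × ℤ)),
        sgn (u + p * ((z : ℤ × ℤ).1 + (z : ℤ × ℤ).2)) * Gfun τ p u v z) =
      (- sgn u) * (thetaMK (u - p) p τ * thetaMKbar (v - p) p τ) := by
    rw [← oddEquiv.tsum_eq (fun z : (evenSetᶜ : Set (ℤ × ℤ)) =>
      sgn (u + p * ((z : ℤ × ℤ).1 + (z : ℤ × ℤ).2)) * Gfun τ p u v z)]
    rw [show (fun z : ℤ × ℤ => sgn (u + p * (((oddEquiv z : ℤ × ℤ)).1 +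
        ((oddEquiv z : ℤ × ℤ)).2)) * Gfun τ p u v (oddEquiv z : ℤ × ℤ)) = fun z : ℤ × ℤ =>
        (- sgn u) * (qpow τ ((p : ℝ) * ((z.1 : ℝ) + ((u - p : ℤ) : ℝ) / (2 * p)) ^ 2) *
          qbarpow τ ((p : ℝ) * ((z.2 : ℝ) + ((v - p : ℤ) : ℝ) / (2 * p)) ^ 2))
      from funext fun z => hodd' z.1 z.2]
    rw [tsum_mul_left]
    congr 1
    exact (tsum_mul_tsum_of_summable_norm (summable_norm_qpow_sq hτ (by positivity) _)
      (summable_norm_qbarpow_sq hτ (by positivity) _)).symm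
  rw [t0, t1]
  ring

end signed

lemma summable_norm_pi {β : Type*} : ∀ {k : ℕ} (f : Fin k → β → ℂ),
    (∀ i, Summable fun x => ‖f i x‖) →
    Summable fun m : Fin k → β => ‖∏ i, f i (m i)‖ := by
  intro k
  induction k with
  | zero =>
    intro f _
    exact Summable.of_finite
  | succ k IH =>
    intro f hf
    rw [← (Fin.consEquiv (fun _ : Fin (k + 1) => β)).summable_iff]
    have h1 : Summable fun x : β => ‖f 0 x‖ := hf 0
    have h2 : Summable fun m : Fin k → β => ‖∏ i : Fin k, f i.succ (m i)‖ :=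
      IH (fun i => f i.succ) (fun i => hf i.succ)
    have base : Summable fun zm : β × (Fin k → β) =>
        ‖f 0 zm.1‖ * ‖∏ i : Fin k, f i.succ (zm.2 i)‖ :=
      Summable.mul_of_nonneg (f := fun x : β => ‖f 0 x‖)
        (g := fun m : Fin k → β => ‖∏ i : Fin k, f i.succ (m i)‖)
        h1 h2 (fun _ => norm_nonneg _) (fun _ => norm_nonneg _)
    apply base.congr
    intro zm
    simp only [Function.comp_apply, Fin.consEquiv_apply]
    rw [← norm_mul]
    congr 1
    rw [Fin.prod_univ_succ]
    simp

lemma tsum_pi_prod {β : Type*} : ∀ {k : ℕ} (f : Fin k → β → ℂ),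
    (∀ i, Summable fun x => ‖f i x‖) →
    ∑' m : Fin k → β, ∏ i, f i (m i) = ∏ i, ∑' x, f i x := by
  intro k
  induction k with
  | zero =>
    intro f _
    simp only [Finset.univ_eq_empty, Finset.prod_empty]
    rw [tsum_eq_single (fun i : Fin 0 => i.elim0)
      (fun b' hb' => absurd (funext fun i => i.elim0) hb')]
  | succ k IH =>
    intro f hf
    rw [← (Fin.consEquiv (fun _ : Fin (k + 1) => β)).tsum_eq
      (fun m : Fin (k + 1) → β => ∏ i, f i (m i))]
    have step : (fun zm : β × (Fin k → β) =>
          ∏ i : Fin (k + 1), f i ((Fin.consEquiv (fun _ : Fin (k + 1) => β)) zm i)) =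
        fun zm : β × (Fin k → β) => f 0 zm.1 * ∏ i : Fin k, f i.succ (zm.2 i) := by
      funext zm
      rw [Fin.prod_univ_succ]
      simp
    rw [step, tsum_mul_tsum_of_summable_norm (hf 0)
      (summable_norm_pi (fun i => f i.succ) (fun i => hf i.succ)) |>.symm]
    rw [Fin.prod_univ_succ, IH (fun i => f i.succ) (fun i => hf i.succ)]


def parMap (p : ℕ) {n : ℕ} (c : Fin n ⊕ Fin n → ZMod p) (m : Fin n ⊕ Fin n → ℤ) :
    Fin n ⊕ Fin n → ℝ :=
  fun i => (liftR c i + p * m i) / Real.sqrt p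

def Fterm (τ : ℂ) {n : ℕ} (l : Fin n ⊕ Fin n → ℝ) : ℂ :=
  qpow τ ((∑ i : Fin n, (l (Sum.inl i) + l (Sum.inr i)) ^ 2) / 4) *
    qbarpow τ ((∑ i : Fin n, (l (Sum.inl i) - l (Sum.inr i)) ^ 2) / 4)

def Nint (p : ℕ) {n : ℕ} (c : Fin n ⊕ Fin n → ZMod p) (m : Fin n ⊕ Fin n → ℤ) : ℤ :=
  ∑ i : Fin n, (((c (Sum.inl i)).val : ℤ) + ((c (Sum.inr i)).val : ℤ)
    + p * (m (Sum.inl i) + m (Sum.inr i)))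

def zipEquiv (n : ℕ) : (Fin n → ℤ × ℤ) ≃ (Fin n ⊕ Fin n → ℤ) where
  toFun q := Sum.elim (fun i => (q i).1) (fun i => (q i).2)
  invFun m i := (m (Sum.inl i), m (Sum.inr i))
  left_inv q := rfl
  right_inv m := funext fun i => by cases i <;> rfl

lemma sgn_sum {ι : Type*} (s : Finset ι) (h : ι → ℤ) :
    sgn (∑ i ∈ s, h i) = ∏ i ∈ s, sgn (h i) := by
  classical
  induction s using Finset.induction with
  | empty => simp [sgn]
  | insert _ _ hx ih => rw [Finset.sum_insert hx, Finset.prod_insert hx, sgn_add, ih]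

lemma sgn_natCast (k : ℕ) : sgn (k : ℤ) = (-1 : ℂ) ^ k := zpow_natCast _ _

variable {n p : ℕ}

lemma parMap_injective (hp : 0 < p) :
    Function.Injective fun y : (Fin n ⊕ Fin n → ZMod p) × (Fin n ⊕ Fin n → ℤ) =>
      parMap p y.1 y.2 := by
  haveI : NeZero p := ⟨hp.ne'⟩
  have hpR : (0 : ℝ) < p := by exact_mod_cast hp
  have hs : Real.sqrt p ≠ 0 := by positivity
  rintro ⟨c, m⟩ ⟨c', m'⟩ h
  simp only at h
  have key : ∀ i, (c i).val = (c' i).val ∧ m i = m' i := by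
    intro i
    have h1 : (liftR c i + p * m i) / Real.sqrt p = (liftR c' i + p * m' i) / Real.sqrt p :=
      congrFun h i
    rw [div_eq_div_iff hs hs] at h1
    have h2 : liftR c i + (p : ℝ) * m i = liftR c' i + p * m' i :=
      mul_right_cancel₀ hs h1
    rw [liftR, liftR] at h2
    have h3 : ((c i).val : ℤ) + p * m i = ((c' i).val : ℤ) + p * m' i := by exact_mod_cast h2
    have h4 : (c i).val < p := ZMod.val_lt _
    have h5 : (c' i).val < p := ZMod.val_lt _
    have h6 : ((c i).val : ℤ) - (c' i).val = p * (m' i - m i) := by rw [mul_sub]; linarith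
    have h8 : ((c i).val : ℤ) - (c' i).val = 0 :=
      Int.eq_zero_of_abs_lt_dvd ⟨m' i - m i, h6⟩
        (by rw [abs_sub_lt_iff]; constructor <;> (push_cast; omega))
    have h9 : (c i).val = (c' i).val := by omega
    refine ⟨h9, ?_⟩
    have h10 : (p : ℤ) * m i = p * m' i := by omega
    exact mul_left_cancel₀ (by exact_mod_cast hp.ne' : (p : ℤ) ≠ 0) h10
  have hc : c = c' := funext fun i =>
    ZMod.val_injective p (key i).1
  have hm : m = m' := funext fun i => (key i).2
  rw [hc, hm]

lemma lorR_parMap (hp : 0 < p) (c : Fin n ⊕ Fin n → ZMod p) (m : Fin n ⊕ Fin n → ℤ) :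
    lorR (fun _ => Real.sqrt p) (parMap p c m) = ((Nint p c m : ℤ) : ℝ) := by
  have hpR : (0 : ℝ) < p := by exact_mod_cast hp
  have hs : Real.sqrt p ≠ 0 := by positivity
  rw [lorR, Nint]
  push_cast
  refine Finset.sum_congr rfl fun i _ => ?_
  simp only [parMap, liftR]
  rw [mul_comm (Real.sqrt p) _, div_mul_cancel₀ _ hs, mul_comm (Real.sqrt p) _,
    div_mul_cancel₀ _ hs]
  ring

lemma Fterm_parMap {τ : ℂ} (hp : 0 < p) (c : Fin n ⊕ Fin n → ZMod p)
    (m : Fin n ⊕ Fin n → ℤ) :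
    Fterm τ (parMap p c m) = ∏ i : Fin n,
      Gfun τ p (((c (Sum.inl i)).val : ℤ) + ((c (Sum.inr i)).val : ℤ))
        (((c (Sum.inl i)).val : ℤ) - ((c (Sum.inr i)).val : ℤ))
        (m (Sum.inl i), m (Sum.inr i)) := by
  have hpR : (0 : ℝ) < p := by exact_mod_cast hp
  rw [Fterm, Finset.sum_div, qpow_sum, Finset.sum_div, qbarpow_sum, ← Finset.prod_mul_distrib]
  refine Finset.prod_congr rfl fun i _ => ?_
  rw [Gfun]
  congr 1
  · congr 1
    simp only [parMap, liftR]
    rw [← add_div, div_pow, Real.sq_sqrt hpR.le, div_div]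
    push_cast
    ring
  · congr 1
    simp only [parMap, liftR]
    rw [div_sub_div_same, div_pow, Real.sq_sqrt hpR.le, div_div]
    push_cast
    ring

lemma summable_norm_Gfun {τ : ℂ} (hτ : 0 < τ.im) (hp : 0 < p) (u v : ℤ) :
    Summable fun z : ℤ × ℤ => ‖Gfun τ p u v z‖ :=
  summable_norm_iff.mpr (summable_Gfun hτ hp u v)

lemma summable_norm_prod_Gfun {τ : ℂ} (hτ : 0 < τ.im) (hp : 0 < p) (u v : Fin n → ℤ) :
    Summable fun m : Fin n ⊕ Fin n → ℤ =>
      ‖∏ i : Fin n, Gfun τ p (u i) (v i) (m (Sum.inl i), m (Sum.inr i))‖ := by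
  rw [← (zipEquiv n).summable_iff]
  exact summable_norm_pi (fun i => Gfun τ p (u i) (v i))
    (fun i => summable_norm_Gfun hτ hp (u i) (v i))

lemma tsum_prod_Gfun {τ : ℂ} (hτ : 0 < τ.im) (hp : 0 < p) (u v : Fin n → ℤ) :
    ∑' m : Fin n ⊕ Fin n → ℤ,
        ∏ i : Fin n, Gfun τ p (u i) (v i) (m (Sum.inl i), m (Sum.inr i))
      = ∏ i : Fin n, (thetaMK (u i) p τ * thetaMKbar (v i) p τ
          + thetaMK (u i - p) p τ * thetaMKbar (v i - p) p τ) := by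
  have h3 : (∑' m : Fin n ⊕ Fin n → ℤ,
        ∏ i : Fin n, Gfun τ p (u i) (v i) (m (Sum.inl i), m (Sum.inr i)))
      = ∑' q : Fin n → ℤ × ℤ, ∏ i : Fin n, Gfun τ p (u i) (v i) (q i) :=
    ((zipEquiv n).tsum_eq fun m => ∏ i : Fin n,
      Gfun τ p (u i) (v i) (m (Sum.inl i), m (Sum.inr i))).symm
  rw [h3, tsum_pi_prod (fun i => Gfun τ p (u i) (v i))
    (fun i => summable_norm_Gfun hτ hp (u i) (v i))]
  exact Finset.prod_congr rfl fun i _ => tsum_Gfun hτ hp (u i) (v i)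

lemma tsum_prod_Gfun_signed {τ : ℂ} (hτ : 0 < τ.im) (hp : 0 < p) (hodd : Odd p)
    (u v : Fin n → ℤ) :
    ∑' m : Fin n ⊕ Fin n → ℤ,
        ∏ i : Fin n, (sgn (u i + p * (m (Sum.inl i) + m (Sum.inr i))) *
          Gfun τ p (u i) (v i) (m (Sum.inl i), m (Sum.inr i)))
      = ∏ i : Fin n, (sgn (u i) * (thetaMK (u i) p τ * thetaMKbar (v i) p τ
          - thetaMK (u i - p) p τ * thetaMKbar (v i - p) p τ)) := by
  have h3 : (∑' m : Fin n ⊕ Fin n → ℤ,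
        ∏ i : Fin n, (sgn (u i + p * (m (Sum.inl i) + m (Sum.inr i))) *
          Gfun τ p (u i) (v i) (m (Sum.inl i), m (Sum.inr i))))
      = ∑' q : Fin n → ℤ × ℤ, ∏ i : Fin n,
          (fun z : ℤ × ℤ => sgn (u i + p * (z.1 + z.2)) * Gfun τ p (u i) (v i) z) (q i) :=
    ((zipEquiv n).tsum_eq fun m => ∏ i : Fin n,
      (sgn (u i + p * (m (Sum.inl i) + m (Sum.inr i))) *
        Gfun τ p (u i) (v i) (m (Sum.inl i), m (Sum.inr i)))).symm
  rw [h3, tsum_pi_prod (fun i => fun z : ℤ × ℤ => sgn (u i + p * (z.1 + z.2)) *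
      Gfun τ p (u i) (v i) z)
    (fun i => ((summable_norm_Gfun hτ hp (u i) (v i)).congr
      (fun z => by rw [norm_mul, norm_sgn, one_mul])))]
  exact Finset.prod_congr rfl fun i _ => tsum_Gfun_signed hτ hp hodd (u i) (v i)

lemma tsum_inner {τ : ℂ} (hτ : 0 < τ.im) (hp : 0 < p) (c : Fin n ⊕ Fin n → ZMod p) :
    ∑' m : Fin n ⊕ Fin n → ℤ, Fterm τ (parMap p c m)
      = ∏ i : Fin n, psiP (c (Sum.inl i)) (c (Sum.inr i)) τ := by
  refine (tsum_congr fun m => Fterm_parMap hp c m).trans ?_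
  refine (tsum_prod_Gfun hτ hp _ _).trans ?_
  exact Finset.prod_congr rfl fun i _ => rfl

lemma tsum_inner_signed {τ : ℂ} (hτ : 0 < τ.im) (hp : 0 < p) (hodd : Odd p)
    (c : Fin n ⊕ Fin n → ZMod p) :
    ∑' m : Fin n ⊕ Fin n → ℤ, sgn (Nint p c m) * Fterm τ (parMap p c m)
      = ∏ i : Fin n, psiM (c (Sum.inl i)) (c (Sum.inr i)) τ := by
  have hterm : ∀ m : Fin n ⊕ Fin n → ℤ, sgn (Nint p c m) * Fterm τ (parMap p c m)
      = ∏ i : Fin n, (sgn ((((c (Sum.inl i)).val : ℤ) + ((c (Sum.inr i)).val : ℤ))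
          + p * (m (Sum.inl i) + m (Sum.inr i))) *
        Gfun τ p (((c (Sum.inl i)).val : ℤ) + ((c (Sum.inr i)).val : ℤ))
          (((c (Sum.inl i)).val : ℤ) - ((c (Sum.inr i)).val : ℤ))
          (m (Sum.inl i), m (Sum.inr i))) := by
    intro m
    rw [Fterm_parMap hp c m, Nint, sgn_sum, ← Finset.prod_mul_distrib]
  refine (tsum_congr hterm).trans ?_
  refine (tsum_prod_Gfun_signed hτ hp hodd _ _).trans ?_
  refine Finset.prod_congr rfl fun i _ => ?_
  rw [psiM,
    show (((c (Sum.inl i)).val : ℤ) + ((c (Sum.inr i)).val : ℤ))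
      = (((c (Sum.inl i)).val + (c (Sum.inr i)).val : ℕ) : ℤ) by push_cast; ring,
    sgn_natCast]

lemma summable_norm_inner {τ : ℂ} (hτ : 0 < τ.im) (hp : 0 < p)
    (c : Fin n ⊕ Fin n → ZMod p) :
    Summable fun m : Fin n ⊕ Fin n → ℤ => ‖Fterm τ (parMap p c m)‖ := by
  refine Summable.congr ?_ (fun m => congrArg norm (Fterm_parMap hp c m).symm)
  exact summable_norm_prod_Gfun hτ hp _ _

----------------------------------------------------------------
-- main lemma
----------------------------------------------------------------

lemma main_aux (hp : p.Prime) (hodd : Odd p) {τ : ℂ} (hτ : 0 < τ.im)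
    (Cset : Set (Fin n ⊕ Fin n → ZMod p)) :
    thetaSet (lam0 (constrA p Cset) (fun _ => Real.sqrt p)) τ =
      (cwe Cset (fun a b => psiP a b τ) + cwe Cset (fun a b => psiM a b τ)) / 2 ∧
    thetaSet (lam1 (constrA p Cset) (fun _ => Real.sqrt p)) τ =
      (cwe Cset (fun a b => psiP a b τ) - cwe Cset (fun a b => psiM a b τ)) / 2 := by
  haveI : NeZero p := ⟨hp.ne_zero⟩
  have hp0 : 0 < p := hp.pos
  set φ : ↥Cset × (Fin n ⊕ Fin n → ℤ) → (Fin n ⊕ Fin n → ℝ) :=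
    fun y => parMap p y.1.1 y.2 with hφ
  set g : ↥Cset × (Fin n ⊕ Fin n → ℤ) → ℂ := fun y => Fterm τ (φ y) with hg_def
  set gs : ↥Cset × (Fin n ⊕ Fin n → ℤ) → ℂ :=
    fun y => sgn (Nint p y.1.1 y.2) * g y with hgs_def
  have hφinj : Function.Injective φ := by
    intro a b hab
    have h2 : ((a.1 : Fin n ⊕ Fin n → ZMod p), a.2) = ((b.1 : Fin n ⊕ Fin n → ZMod p), b.2) :=
      parMap_injective hp0 hab
    obtain ⟨h3, h4⟩ := Prod.mk.injEq .. ▸ h2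
    exact Prod.ext (Subtype.ext h3) h4
  have hrange : constrA p Cset = Set.range φ := by
    ext l
    constructor
    · rintro ⟨c, hc, m, rfl⟩; exact ⟨⟨⟨c, hc⟩, m⟩, rfl⟩
    · rintro ⟨⟨⟨c, hc⟩, m⟩, rfl⟩; exact ⟨c, hc, m, rfl⟩
  have hlor : ∀ y : ↥Cset × (Fin n ⊕ Fin n → ℤ),
      lorR (fun _ => Real.sqrt p) (φ y) = ((Nint p y.1.1 y.2 : ℤ) : ℝ) :=
    fun y => lorR_parMap hp0 y.1.1 y.2
  have hlam0 : lam0 (constrA p Cset) (fun _ => Real.sqrt p)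
      = φ '' {y | Even (Nint p y.1.1 y.2)} := by
    ext l
    simp only [lam0, Set.mem_sep_iff, Set.mem_image, Set.mem_setOf_eq, hrange, Set.mem_range]
    constructor
    · rintro ⟨⟨y, rfl⟩, k, hk⟩
      rw [hlor y] at hk
      have hN : Nint p y.1.1 y.2 = 2 * k := by exact_mod_cast hk
      exact ⟨y, ⟨k, by omega⟩, rfl⟩
    · rintro ⟨y, ⟨k, hk⟩, rfl⟩
      refine ⟨⟨y, rfl⟩, k, ?_⟩
      rw [hlor y, hk]
      push_cast
      ring
  have hlam1 : lam1 (constrA p Cset) (fun _ => Real.sqrt p)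
      = φ '' {y | Odd (Nint p y.1.1 y.2)} := by
    ext l
    simp only [lam1, Set.mem_sep_iff, Set.mem_image, Set.mem_setOf_eq, hrange, Set.mem_range]
    constructor
    · rintro ⟨⟨y, rfl⟩, k, hk⟩
      rw [hlor y] at hk
      have hN : Nint p y.1.1 y.2 = 2 * k + 1 := by exact_mod_cast hk
      exact ⟨y, ⟨k, by omega⟩, rfl⟩
    · rintro ⟨y, ⟨k, hk⟩, rfl⟩
      refine ⟨⟨y, rfl⟩, k, ?_⟩
      rw [hlor y, hk]
      push_cast
      ring
  have hgnorm : Summable fun y => ‖g y‖ := by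
    refine (summable_prod_of_nonneg (fun _ => norm_nonneg _)).mpr
      ⟨fun c => ?_, Summable.of_finite⟩
    exact summable_norm_inner hτ hp0 c.1
  have hg : Summable g := hgnorm.of_norm
  have hgsnorm : Summable fun y => ‖gs y‖ :=
    hgnorm.congr fun y => by rw [hgs_def]; rw [norm_mul, norm_sgn, one_mul]
  have hgs : Summable gs := hgsnorm.of_norm
  have hT : (∑' y, g y) = cwe Cset (fun a b => psiP a b τ) := by
    rw [Summable.tsum_prod hg, cwe]
    exact tsum_congr fun c => tsum_inner hτ hp0 c.1
  have hS : (∑' y, gs y) = cwe Cset (fun a b => psiM a b τ) := by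
    rw [Summable.tsum_prod hgs, cwe]
    exact tsum_congr fun c => tsum_inner_signed hτ hp0 hodd c.1
  have ind0 : ∀ y, Set.indicator {y : ↥Cset × (Fin n ⊕ Fin n → ℤ) |
      Even (Nint p y.1.1 y.2)} g y = (g y + gs y) / 2 := by
    intro y
    by_cases h : Even (Nint p y.1.1 y.2)
    · have hy : y ∈ {y : ↥Cset × (Fin n ⊕ Fin n → ℤ) | Even (Nint p y.1.1 y.2)} := h
      rw [Set.indicator_of_mem hy g, hgs_def]
      simp only
      rw [sgn_even h, one_mul]
      ring
    · have hy : y ∉ {y : ↥Cset × (Fin n ⊕ Fin n → ℤ) | Even (Nint p y.1.1 y.2)} := h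
      rw [Set.indicator_of_notMem hy g, hgs_def]
      simp only
      rw [sgn_odd (Int.not_even_iff_odd.mp h), neg_one_mul]
      ring
  have ind1 : ∀ y, Set.indicator {y : ↥Cset × (Fin n ⊕ Fin n → ℤ) |
      Odd (Nint p y.1.1 y.2)} g y = (g y - gs y) / 2 := by
    intro y
    by_cases h : Odd (Nint p y.1.1 y.2)
    · have hy : y ∈ {y : ↥Cset × (Fin n ⊕ Fin n → ℤ) | Odd (Nint p y.1.1 y.2)} := h
      rw [Set.indicator_of_mem hy g, hgs_def]
      simp only
      rw [sgn_odd h, neg_one_mul]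
      ring
    · have hy : y ∉ {y : ↥Cset × (Fin n ⊕ Fin n → ℤ) | Odd (Nint p y.1.1 y.2)} := h
      rw [Set.indicator_of_notMem hy g, hgs_def]
      simp only
      rw [sgn_even (Int.not_odd_iff_even.mp h), one_mul]
      ring
  constructor
  · rw [hlam0]
    calc thetaSet (φ '' {y | Even (Nint p y.1.1 y.2)}) τ
        = ∑' x : {y : ↥Cset × (Fin n ⊕ Fin n → ℤ) | Even (Nint p y.1.1 y.2)}, g x.1 :=
          ((Equiv.Set.image φ _ hφinj).tsum_eq
            (fun l : ↥(φ '' {y | Even (Nint p y.1.1 y.2)}) => Fterm τ l.1)).symm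
      _ = ∑' y, Set.indicator {y : ↥Cset × (Fin n ⊕ Fin n → ℤ) |
            Even (Nint p y.1.1 y.2)} g y := tsum_subtype _ g
      _ = ∑' y, (g y + gs y) / 2 := tsum_congr ind0
      _ = ((∑' y, g y) + ∑' y, gs y) / 2 := by rw [tsum_div_const, Summable.tsum_add hg hgs]
      _ = _ := by rw [hT, hS]
  · rw [hlam1]
    calc thetaSet (φ '' {y | Odd (Nint p y.1.1 y.2)}) τ
        = ∑' x : {y : ↥Cset × (Fin n ⊕ Fin n → ℤ) | Odd (Nint p y.1.1 y.2)}, g x.1 :=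
          ((Equiv.Set.image φ _ hφinj).tsum_eq
            (fun l : ↥(φ '' {y | Odd (Nint p y.1.1 y.2)}) => Fterm τ l.1)).symm
      _ = ∑' y, Set.indicator {y : ↥Cset × (Fin n ⊕ Fin n → ℤ) |
            Odd (Nint p y.1.1 y.2)} g y := tsum_subtype _ g
      _ = ∑' y, (g y - gs y) / 2 := tsum_congr ind1
      _ = ((∑' y, g y) - ∑' y, gs y) / 2 := by rw [tsum_div_const, Summable.tsum_sub hg hgs]
      _ = _ := by rw [hT, hS]

end Statement14Proof
end Statement14Proof

/-- Let `p` be an odd prime, `𝒞 ⊆ (ℤ/p)^{2n}` a linear code self-dual with respect to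
`η`, `χ := √p·1_{2n} ∈ Λ(𝒞)`, and `Λ₀ := {λ ∈ Λ(𝒞) : χ ⊙ λ ∈ 2ℤ}`,
`Λ₁ := {λ ∈ Λ(𝒞) : χ ⊙ λ ∈ 2ℤ+1}`. Then for every `τ` in the upper half-plane,
`Θ_{Λ₀}(τ) = ½[W_𝒞({ψ⁺}) + W_𝒞({ψ⁻})]` and `Θ_{Λ₁}(τ) = ½[W_𝒞({ψ⁺}) − W_𝒞({ψ⁻})]`. -/
theorem statement14 {n p : ℕ} (hn : 1 ≤ n) (hp : p.Prime) (hodd : Odd p)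
    (C : Submodule (ZMod p) (Fin n ⊕ Fin n → ZMod p))
    (hsd : (C : Set (Fin n ⊕ Fin n → ZMod p)) = {v | ∀ c ∈ C, lorZmod v c = 0})
    (τ : ℂ) (hτ : 0 < τ.im) :
    let χ : Fin n ⊕ Fin n → ℝ := fun _ => Real.sqrt p
    let Λ := constrA p (C : Set (Fin n ⊕ Fin n → ZMod p))
    thetaSet (lam0 Λ χ) τ =
        (cwe (C : Set (Fin n ⊕ Fin n → ZMod p)) (fun a b => psiP a b τ)
          + cwe (C : Set (Fin n ⊕ Fin n → ZMod p)) (fun a b => psiM a b τ)) / 2 ∧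
      thetaSet (lam1 Λ χ) τ =
        (cwe (C : Set (Fin n ⊕ Fin n → ZMod p)) (fun a b => psiP a b τ)
          - cwe (C : Set (Fin n ⊕ Fin n → ZMod p)) (fun a b => psiM a b τ)) / 2 := by
  intro χ Λ
  exact Statement14Proof.main_aux hp hodd hτ (C : Set (Fin n ⊕ Fin n → ZMod p))
end
end

section
/- Let 𝒞 ⊆ (ℤ/2)^{2n} be a doubly-even self-dual code with respect to η which is F₄-even (equivalently, 1_{2n} ∈ 𝒞), let χ := (1/√2)·1_{2n} ∈ Λ(𝒞), and set Λ₀ := {λ ∈ Λ(𝒞) : χ ⊙ λ ∈ 2ℤ}, Λ₁ := {λ ∈ Λ(𝒞) : χ ⊙ λ ∈ 2ℤ+1} (one has χ ⊙ λ ∈ ℤ for all λ ∈ Λ(𝒞)). Then for every τ in the upper half-plane: Θ_{Λ₀}(τ) = ½[W_𝒞({ψ⁺_{ab}}) + W_𝒞({ψ⁻_{ab}})] and Θ_{Λ₁}(τ) = ½[W_𝒞({ψ⁺_{ab}}) − W_𝒞({ψ⁻_{ab}})], where, with ã, b̃ ∈ {0,1} the lifts of a, b ∈ ℤ/2, ψ⁺_{ab}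 := Θ_{ã+b̃,2}Θ̄_{ã−b̃,2} + Θ_{ã+b̃−2,2}Θ̄_{ã−b̃−2,2} and ψ⁻_{ab} := e^{πi(ã+b̃)/2}(Θ_{ã+b̃,2}Θ̄_{ã−b̃,2} − Θ_{ã+b̃−2,2}Θ̄_{ã−b̃−2,2}). -/
noncomputable section
open scoped BigOperators

/-- A binary code `𝒞 ⊆ (ℤ/2)^{2n}` is F₄-even if every codeword `c = (α, β)` satisfies
`α̃·α̃ + β̃·β̃ − α̃·β̃ ∈ 2ℤ`, where `α̃, β̃ ∈ {0,1}^n` are the integer lifts. -/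
def isF4Even {n : ℕ} (C : Set (Fin n ⊕ Fin n → ZMod 2)) : Prop :=
  ∀ c ∈ C, (2 : ℤ) ∣ ∑ i : Fin n,
    (((c (Sum.inl i)).val : ℤ) * ((c (Sum.inl i)).val : ℤ)
      + ((c (Sum.inr i)).val : ℤ) * ((c (Sum.inr i)).val : ℤ)
      - ((c (Sum.inl i)).val : ℤ) * ((c (Sum.inr i)).val : ℤ))

/-- A binary code `𝒞 ⊆ (ℤ/2)^{2n}` is doubly-even with respect to `η` if the integer
lift of every codeword satisfies `c̃ ⊙ c̃ ∈ 4ℤ`. -/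
def isDoublyEven {n : ℕ} (C : Set (Fin n ⊕ Fin n → ZMod 2)) : Prop :=
  ∀ c ∈ C, (4 : ℤ) ∣ ∑ i : Fin n,
    (((c (Sum.inl i)).val : ℤ) * ((c (Sum.inr i)).val : ℤ)
      + ((c (Sum.inr i)).val : ℤ) * ((c (Sum.inl i)).val : ℤ))

/-- `ψ⁺_{ab} = Θ_{ã+b̃,2}Θ̄_{ã−b̃,2} + Θ_{ã+b̃−2,2}Θ̄_{ã−b̃−2,2}`. -/
def psiP2 (a b : ZMod 2) (τ : ℂ) : ℂ :=
  thetaMK ((a.val : ℤ) + (b.val : ℤ)) 2 τ * thetaMKbar ((a.val : ℤ) - (b.val : ℤ)) 2 τ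
    + thetaMK ((a.val : ℤ) + (b.val : ℤ) - 2) 2 τ
        * thetaMKbar ((a.val : ℤ) - (b.val : ℤ) - 2) 2 τ

/-- `ψ⁻_{ab} = e^{πi(ã+b̃)/2}(Θ_{ã+b̃,2}Θ̄_{ã−b̃,2} − Θ_{ã+b̃−2,2}Θ̄_{ã−b̃−2,2})`. -/
def psiM2 (a b : ZMod 2) (τ : ℂ) : ℂ :=
  Complex.exp (Real.pi * Complex.I * ((a.val : ℝ) + (b.val : ℝ)) / 2) *
    (thetaMK ((a.val : ℤ) + (b.val : ℤ)) 2 τ * thetaMKbar ((a.val : ℤ) - (b.val : ℤ)) 2 τ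
      - thetaMK ((a.val : ℤ) + (b.val : ℤ) - 2) 2 τ
          * thetaMKbar ((a.val : ℤ) - (b.val : ℤ) - 2) 2 τ)

set_option maxHeartbeats 1600000

lemma S16.norm_qpow (τ : ℂ) (x : ℝ) :
    ‖qpow τ x‖ = Real.exp (-(2 * Real.pi * τ.im * x)) := by
  rw [qpow, Complex.norm_exp]
  congr 1
  simp [Complex.mul_re, Complex.mul_im]

lemma S16.norm_qbarpow (τ : ℂ) (x : ℝ) :
    ‖qbarpow τ x‖ = Real.exp (-(2 * Real.pi * τ.im * x)) := by
  rw [qbarpow, Complex.norm_exp]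
  congr 1
  simp [Complex.mul_re, Complex.mul_im]

lemma S16.qpow_sum {ι : Type*} (τ : ℂ) (s : Finset ι) (f : ι → ℝ) :
    qpow τ (∑ i ∈ s, f i) = ∏ i ∈ s, qpow τ (f i) := by
  rw [qpow]
  rw [show ∏ i ∈ s, qpow τ (f i) = ∏ i ∈ s, Complex.exp (2 * Real.pi * Complex.I * τ * (f i)) from rfl,
    ← Complex.exp_sum]
  congr 1
  rw [Complex.ofReal_sum, Finset.mul_sum]

lemma S16.qbarpow_sum {ι : Type*} (τ : ℂ) (s : Finset ι) (f : ι → ℝ) :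
    qbarpow τ (∑ i ∈ s, f i) = ∏ i ∈ s, qbarpow τ (f i) := by
  rw [qbarpow]
  rw [show ∏ i ∈ s, qbarpow τ (f i) = ∏ i ∈ s, Complex.exp (-(2 * Real.pi * Complex.I) * (starRingEnd ℂ τ) * (f i)) from rfl,
    ← Complex.exp_sum]
  congr 1
  rw [Complex.ofReal_sum, Finset.mul_sum]

lemma S16.summable_exp_gauss {c : ℝ} (hc : 0 < c) (μ : ℝ) :
    Summable fun j : ℤ => Real.exp (-(c * ((j : ℝ) + μ) ^ 2)) := by
  have hgeo : Summable fun n : ℕ => Real.exp (-(c/2)) ^ n := by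
    refine summable_geometric_of_lt_one (Real.exp_pos _).le ?_
    calc Real.exp (-(c/2)) < Real.exp 0 := Real.exp_lt_exp.2 (by linarith)
    _ = 1 := Real.exp_zero
  have hbase : Summable fun n : ℕ => Real.exp (c * μ ^ 2) * Real.exp (-((c/2) * (n : ℝ) ^ 2)) := by
    apply Summable.mul_left
    refine Summable.of_nonneg_of_le (fun n => (Real.exp_pos _).le) (fun n => ?_) hgeo
    rw [← Real.exp_nat_mul]
    apply Real.exp_le_exp.2
    have hn : (n : ℝ) ≤ (n : ℝ) ^ 2 := by
      exact_mod_cast Nat.le_self_pow (two_ne_zero) n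
    nlinarith
  have key : ∀ x : ℝ, Real.exp (-(c * (x + μ) ^ 2))
      ≤ Real.exp (c * μ ^ 2) * Real.exp (-((c/2) * x ^ 2)) := by
    intro x
    rw [← Real.exp_add]
    apply Real.exp_le_exp.2
    nlinarith [sq_nonneg (x + 2 * μ)]
  apply Summable.of_nat_of_neg
  · refine Summable.of_nonneg_of_le (fun n => (Real.exp_pos _).le) (fun n => ?_) hbase
    simpa using key (n : ℝ)
  · refine Summable.of_nonneg_of_le (fun n => (Real.exp_pos _).le) (fun n => ?_) hbase
    have := key (-(n : ℝ))
    simpa [neg_sq] using this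

lemma S16.summable_norm_qpow {τ : ℂ} (ht : 0 < τ.im) (A : ℝ) :
    Summable fun j : ℤ => ‖qpow τ ((A + 4 * (j : ℝ)) ^ 2 / 8)‖ := by
  simp only [S16.norm_qpow]
  have hc : 0 < 4 * Real.pi * τ.im := by positivity
  refine (S16.summable_exp_gauss hc (A / 4)).congr fun j => ?_
  congr 1
  ring

lemma S16.summable_norm_qbarpow {τ : ℂ} (ht : 0 < τ.im) (A : ℝ) :
    Summable fun j : ℤ => ‖qbarpow τ ((A + 4 * (j : ℝ)) ^ 2 / 8)‖ := by
  simp only [S16.norm_qbarpow]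
  have hc : 0 < 4 * Real.pi * τ.im := by positivity
  refine (S16.summable_exp_gauss hc (A / 4)).congr fun j => ?_
  congr 1
  ring

lemma S16.thetaMK_two (m : ℤ) (τ : ℂ) :
    thetaMK m 2 τ = ∑' j : ℤ, qpow τ (((m : ℝ) + 4 * (j : ℝ)) ^ 2 / 8) := by
  unfold thetaMK
  refine tsum_congr fun j => ?_
  congr 1
  push_cast
  ring

lemma S16.thetaMKbar_two (m : ℤ) (τ : ℂ) :
    thetaMKbar m 2 τ = ∑' j : ℤ, qbarpow τ (((m : ℝ) + 4 * (j : ℝ)) ^ 2 / 8) := by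
  unfold thetaMKbar
  refine tsum_congr fun j => ?_
  congr 1
  push_cast
  ring

lemma S16.thetaMK_period (m : ℤ) (τ : ℂ) : thetaMK (m + 4) 2 τ = thetaMK m 2 τ := by
  rw [S16.thetaMK_two, S16.thetaMK_two]
  rw [← (Equiv.addRight (1 : ℤ)).tsum_eq (fun j : ℤ => qpow τ (((m : ℝ) + 4 * (j : ℝ)) ^ 2 / 8))]
  refine tsum_congr fun j => ?_
  simp only [Equiv.coe_addRight]
  congr 1
  push_cast
  ring

lemma S16.thetaMKbar_period (m : ℤ) (τ : ℂ) : thetaMKbar (m + 4) 2 τ = thetaMKbar m 2 τ := by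
  rw [S16.thetaMKbar_two, S16.thetaMKbar_two]
  rw [← (Equiv.addRight (1 : ℤ)).tsum_eq (fun j : ℤ => qbarpow τ (((m : ℝ) + 4 * (j : ℝ)) ^ 2 / 8))]
  refine tsum_congr fun j => ?_
  simp only [Equiv.coe_addRight]
  congr 1
  push_cast
  ring

def S16.parMap : Bool × ℤ × ℤ → ℤ × ℤ :=
  fun q => (q.2.1 + q.2.2 + (if q.1 then 1 else 0), q.2.1 - q.2.2)

lemma S16.parMap_bij : Function.Bijective S16.parMap := by
  constructor
  · rintro ⟨r, j, k⟩ ⟨r', j', k'⟩ h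
    simp only [S16.parMap, Prod.mk.injEq] at h
    obtain ⟨h1, h2⟩ := h
    cases r <;> cases r' <;>
      simp only [Bool.false_eq_true, if_true, if_false, Prod.mk.injEq, true_and, false_and,
        and_true] at h1 ⊢ <;>
      omega
  · rintro ⟨u, v⟩
    rcases Int.even_or_odd (u + v) with ⟨t, ht⟩ | ⟨t, ht⟩
    · refine ⟨(false, (u + v) / 2, (u - v) / 2), ?_⟩
      simp only [S16.parMap, Bool.false_eq_true, if_false, Prod.mk.injEq]
      constructor <;> omega
    · refine ⟨(true, (u + v - 1) / 2, (u - v - 1) / 2), ?_⟩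
      simp only [S16.parMap, if_true, Prod.mk.injEq]
      constructor <;> omega

def S16.parEquiv : Bool × ℤ × ℤ ≃ ℤ × ℤ := Equiv.ofBijective S16.parMap S16.parMap_bij


lemma S16.qpow_congr (τ : ℂ) {x y : ℝ} (h : x = y) : qpow τ x = qpow τ y := by rw [h]
lemma S16.qbarpow_congr (τ : ℂ) {x y : ℝ} (h : x = y) : qbarpow τ x = qbarpow τ y := by rw [h]

def S16.Tc (τ : ℂ) (a b : ZMod 2) (p : ℤ × ℤ) : ℂ :=
  qpow τ (((a.val : ℝ) + (b.val : ℝ) + 2 * (p.1 : ℝ) + 2 * (p.2 : ℝ)) ^ 2 / 8) *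
    qbarpow τ (((a.val : ℝ) - (b.val : ℝ) + 2 * (p.1 : ℝ) - 2 * (p.2 : ℝ)) ^ 2 / 8)

def S16.Tm (τ : ℂ) (a b : ZMod 2) (p : ℤ × ℤ) : ℂ :=
  Complex.exp (Real.pi * Complex.I * ((a.val : ℝ) + (b.val : ℝ)) / 2) *
    ((-1 : ℂ) ^ (p.1 + p.2) * S16.Tc τ a b p)

lemma S16.summable_norm_Tc {τ : ℂ} (ht : 0 < τ.im) (a b : ZMod 2) :
    Summable fun p : ℤ × ℤ => ‖S16.Tc τ a b p‖ := by
  have hc : 0 < Real.pi * τ.im := by positivity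
  have hH : Summable fun q : ℤ × ℤ =>
      Real.exp (-(Real.pi * τ.im * ((q.1 : ℝ) + ((a.val : ℝ) + (b.val : ℝ)) / 2) ^ 2)) *
        Real.exp (-(Real.pi * τ.im * ((q.2 : ℝ) + ((a.val : ℝ) - (b.val : ℝ)) / 2) ^ 2)) := by
    exact Summable.mul_of_nonneg (S16.summable_exp_gauss hc (((a.val : ℝ) + (b.val : ℝ)) / 2))
      (S16.summable_exp_gauss hc (((a.val : ℝ) - (b.val : ℝ)) / 2))
      (fun _ => (Real.exp_pos _).le) (fun _ => (Real.exp_pos _).le)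
  have hinj : Function.Injective (fun p : ℤ × ℤ => ((p.1 + p.2, p.1 - p.2) : ℤ × ℤ)) := by
    rintro ⟨u, v⟩ ⟨u', v'⟩ h
    simp only [Prod.mk.injEq] at h ⊢
    omega
  refine (hH.comp_injective hinj).congr fun p => ?_
  simp only [Function.comp_apply, S16.Tc, norm_mul, S16.norm_qpow, S16.norm_qbarpow,
    ← Real.exp_add]
  congr 1
  push_cast
  ring

lemma S16.norm_Tm {τ : ℂ} (a b : ZMod 2) (p : ℤ × ℤ) :
    ‖S16.Tm τ a b p‖ = ‖S16.Tc τ a b p‖ := by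
  rw [S16.Tm, norm_mul, norm_mul, norm_zpow, norm_neg, norm_one, one_zpow, one_mul,
    Complex.norm_exp]
  have : (Real.pi * Complex.I * ((a.val : ℝ) + (b.val : ℝ)) / 2 : ℂ).re = 0 := by
    simp [Complex.mul_re, Complex.mul_im, Complex.div_re]
  rw [this, Real.exp_zero, one_mul]

lemma S16.summable_norm_Tm {τ : ℂ} (ht : 0 < τ.im) (a b : ZMod 2) :
    Summable fun p : ℤ × ℤ => ‖S16.Tm τ a b p‖ :=
  (S16.summable_norm_Tc ht a b).congr fun p => (S16.norm_Tm a b p).symm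

lemma S16.branch {τ : ℂ} (ht : 0 < τ.im) (a b : ZMod 2) (e : ℤ) :
    (∑' jk : ℤ × ℤ, S16.Tc τ a b (jk.1 + jk.2 + e, jk.1 - jk.2))
      = thetaMK ((a.val : ℤ) + (b.val : ℤ) + 2 * e) 2 τ
          * thetaMKbar ((a.val : ℤ) - (b.val : ℤ) + 2 * e) 2 τ := by
  have hpt : ∀ jk : ℤ × ℤ, S16.Tc τ a b (jk.1 + jk.2 + e, jk.1 - jk.2)
      = (fun j : ℤ =>
          qpow τ (((((a.val : ℤ) + (b.val : ℤ) + 2 * e : ℤ) : ℝ) + 4 * (j : ℝ)) ^ 2 / 8)) jk.1 *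
        (fun k : ℤ =>
          qbarpow τ (((((a.val : ℤ) - (b.val : ℤ) + 2 * e : ℤ) : ℝ) + 4 * (k : ℝ)) ^ 2 / 8)) jk.2 := by
    rintro ⟨j, k⟩
    exact congrArg₂ (· * ·)
      (S16.qpow_congr τ (by push_cast; ring))
      (S16.qbarpow_congr τ (by push_cast; ring))
  rw [tsum_congr hpt,
    ← tsum_mul_tsum_of_summable_norm (S16.summable_norm_qpow ht _) (S16.summable_norm_qbarpow ht _),
    ← S16.thetaMK_two, ← S16.thetaMKbar_two]

lemma S16.parEquiv_false (jk : ℤ × ℤ) :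
    S16.parEquiv (false, jk) = (jk.1 + jk.2 + 0, jk.1 - jk.2) := by
  simp [S16.parEquiv, S16.parMap, Equiv.ofBijective]

lemma S16.parEquiv_true (jk : ℤ × ℤ) :
    S16.parEquiv (true, jk) = (jk.1 + jk.2 + 1, jk.1 - jk.2) := by
  simp [S16.parEquiv, S16.parMap, Equiv.ofBijective]

lemma S16.tsum_Tc {τ : ℂ} (ht : 0 < τ.im) (a b : ZMod 2) :
    ∑' p : ℤ × ℤ, S16.Tc τ a b p = psiP2 a b τ := by
  have hsum : Summable fun p : ℤ × ℤ => S16.Tc τ a b p := (S16.summable_norm_Tc ht a b).of_norm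
  have hsum' : Summable fun q : Bool × ℤ × ℤ => S16.Tc τ a b (S16.parEquiv q) :=
    S16.parEquiv.summable_iff.mpr hsum
  have hslice : ∀ r : Bool, Summable fun jk : ℤ × ℤ => S16.Tc τ a b (S16.parEquiv (r, jk)) := by
    intro r
    have hir : Function.Injective (fun jk : ℤ × ℤ => ((r, jk) : Bool × ℤ × ℤ)) :=
      fun x y h => (Prod.ext_iff.mp h).2
    exact hsum.comp_injective (S16.parEquiv.injective.comp hir)
  rw [← S16.parEquiv.tsum_eq (fun p => S16.Tc τ a b p), Summable.tsum_prod' hsum' hslice, tsum_fintype,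
    Fintype.sum_bool]
  have e1 : (∑' jk : ℤ × ℤ, S16.Tc τ a b (S16.parEquiv (true, jk)))
      = thetaMK ((a.val : ℤ) + (b.val : ℤ) - 2) 2 τ
          * thetaMKbar ((a.val : ℤ) - (b.val : ℤ) - 2) 2 τ := by
    rw [tsum_congr fun jk => congrArg (S16.Tc τ a b) (S16.parEquiv_true jk), S16.branch ht a b 1,
      show (a.val : ℤ) + (b.val : ℤ) + 2 * 1 = ((a.val : ℤ) + (b.val : ℤ) - 2) + 4 by ring,
      show (a.val : ℤ) - (b.val : ℤ) + 2 * 1 = ((a.val : ℤ) - (b.val : ℤ) - 2) + 4 by ring,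
      S16.thetaMK_period, S16.thetaMKbar_period]
  have e0 : (∑' jk : ℤ × ℤ, S16.Tc τ a b (S16.parEquiv (false, jk)))
      = thetaMK ((a.val : ℤ) + (b.val : ℤ)) 2 τ
          * thetaMKbar ((a.val : ℤ) - (b.val : ℤ)) 2 τ := by
    rw [tsum_congr fun jk => congrArg (S16.Tc τ a b) (S16.parEquiv_false jk), S16.branch ht a b 0,
      show (a.val : ℤ) + (b.val : ℤ) + 2 * 0 = (a.val : ℤ) + (b.val : ℤ) by ring,
      show (a.val : ℤ) - (b.val : ℤ) + 2 * 0 = (a.val : ℤ) - (b.val : ℤ) by ring]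
  rw [e0, e1, psiP2]
  ring

lemma S16.tsum_Tm {τ : ℂ} (ht : 0 < τ.im) (a b : ZMod 2) :
    ∑' p : ℤ × ℤ, S16.Tm τ a b p = psiM2 a b τ := by
  unfold S16.Tm
  rw [tsum_mul_left]
  have hsum : Summable fun p : ℤ × ℤ => (-1 : ℂ) ^ (p.1 + p.2) * S16.Tc τ a b p := by
    refine Summable.of_norm (((S16.summable_norm_Tc ht a b)).congr fun p => ?_)
    rw [norm_mul, norm_zpow, norm_neg, norm_one, one_zpow, one_mul]
  have hsum' : Summable fun q : Bool × ℤ × ℤ =>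
      (-1 : ℂ) ^ ((S16.parEquiv q).1 + (S16.parEquiv q).2) * S16.Tc τ a b (S16.parEquiv q) :=
    S16.parEquiv.summable_iff.mpr hsum
  have hslice : ∀ r : Bool, Summable fun jk : ℤ × ℤ =>
      (-1 : ℂ) ^ ((S16.parEquiv (r, jk)).1 + (S16.parEquiv (r, jk)).2)
        * S16.Tc τ a b (S16.parEquiv (r, jk)) := by
    intro r
    have hir : Function.Injective (fun jk : ℤ × ℤ => ((r, jk) : Bool × ℤ × ℤ)) :=
      fun x y h => (Prod.ext_iff.mp h).2
    exact hsum.comp_injective (S16.parEquiv.injective.comp hir)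
  rw [← S16.parEquiv.tsum_eq (fun p => (-1 : ℂ) ^ (p.1 + p.2) * S16.Tc τ a b p),
    Summable.tsum_prod' hsum' hslice, tsum_fintype, Fintype.sum_bool]
  have e1 : (∑' jk : ℤ × ℤ, (-1 : ℂ) ^ ((S16.parEquiv (true, jk)).1 + (S16.parEquiv (true, jk)).2)
        * S16.Tc τ a b (S16.parEquiv (true, jk)))
      = -(thetaMK ((a.val : ℤ) + (b.val : ℤ) - 2) 2 τ
          * thetaMKbar ((a.val : ℤ) - (b.val : ℤ) - 2) 2 τ) := by
    have hpt : ∀ jk : ℤ × ℤ,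
        (-1 : ℂ) ^ ((S16.parEquiv (true, jk)).1 + (S16.parEquiv (true, jk)).2)
          * S16.Tc τ a b (S16.parEquiv (true, jk))
        = -(S16.Tc τ a b (jk.1 + jk.2 + 1, jk.1 - jk.2)) := by
      rintro ⟨j, k⟩
      rw [S16.parEquiv_true]
      have hsgn : ((-1 : ℂ) ^ (((j, k).1 + (j, k).2 + 1) + ((j, k).1 - (j, k).2)) : ℂ) = -1 :=
        Odd.neg_one_zpow ⟨j, by ring⟩
      rw [hsgn, neg_one_mul]
    rw [tsum_congr hpt, tsum_neg, S16.branch ht a b 1,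
      show (a.val : ℤ) + (b.val : ℤ) + 2 * 1 = ((a.val : ℤ) + (b.val : ℤ) - 2) + 4 by ring,
      show (a.val : ℤ) - (b.val : ℤ) + 2 * 1 = ((a.val : ℤ) - (b.val : ℤ) - 2) + 4 by ring,
      S16.thetaMK_period, S16.thetaMKbar_period]
  have e0 : (∑' jk : ℤ × ℤ, (-1 : ℂ) ^ ((S16.parEquiv (false, jk)).1 + (S16.parEquiv (false, jk)).2)
        * S16.Tc τ a b (S16.parEquiv (false, jk)))
      = thetaMK ((a.val : ℤ) + (b.val : ℤ)) 2 τ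
          * thetaMKbar ((a.val : ℤ) - (b.val : ℤ)) 2 τ := by
    have hpt : ∀ jk : ℤ × ℤ,
        (-1 : ℂ) ^ ((S16.parEquiv (false, jk)).1 + (S16.parEquiv (false, jk)).2)
          * S16.Tc τ a b (S16.parEquiv (false, jk))
        = S16.Tc τ a b (jk.1 + jk.2 + 0, jk.1 - jk.2) := by
      rintro ⟨j, k⟩
      rw [S16.parEquiv_false]
      have hsgn : ((-1 : ℂ) ^ (((j, k).1 + (j, k).2 + 0) + ((j, k).1 - (j, k).2)) : ℂ) = 1 :=
        Even.neg_one_zpow ⟨j, by ring⟩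
      rw [hsgn, one_mul]
    rw [tsum_congr hpt, S16.branch ht a b 0,
      show (a.val : ℤ) + (b.val : ℤ) + 2 * 0 = (a.val : ℤ) + (b.val : ℤ) by ring,
      show (a.val : ℤ) - (b.val : ℤ) + 2 * 0 = (a.val : ℤ) - (b.val : ℤ) by ring]
  rw [e0, e1, psiM2]
  ring

lemma S16.pi_tsum_prod {γ : Type*} :
    ∀ (N : ℕ) (f : Fin N → γ → ℂ), (∀ i, Summable fun x => ‖f i x‖) →
      (Summable fun g : Fin N → γ => ‖∏ i, f i (g i)‖) ∧
        ((∑' g : Fin N → γ, ∏ i, f i (g i)) = ∏ i, ∑' x, f i x) := by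
  intro N
  induction N with
  | zero =>
    intro f _
    constructor
    · exact Summable.of_finite
    · simp only [Finset.univ_eq_empty, Finset.prod_empty]
      exact tsum_eq_single default fun b hb => absurd (Subsingleton.elim b default) hb
  | succ N IH =>
    intro f hf
    obtain ⟨IHs, IHt⟩ := IH (fun i => f i.succ) (fun i => hf i.succ)
    set E : γ × (Fin N → γ) ≃ (Fin (N + 1) → γ) := Fin.consEquiv (fun _ => γ) with hE
    have hprod : ∀ p : γ × (Fin N → γ),
        (∏ i, f i (E p i)) = f 0 p.1 * ∏ i : Fin N, f i.succ (p.2 i) := by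
      intro p
      rw [Fin.prod_univ_succ]
      simp [hE, Fin.consEquiv]
    have hs2 : Summable (fun p : γ × (Fin N → γ) =>
        ‖f 0 p.1‖ * ‖∏ i : Fin N, f i.succ (p.2 i)‖) := by
      exact Summable.mul_of_nonneg (hf 0) IHs (fun _ => norm_nonneg _) (fun _ => norm_nonneg _)
    constructor
    · rw [← E.summable_iff]
      refine hs2.congr fun p => ?_
      simp only [Function.comp_apply]
      rw [hprod p, norm_mul]
    · rw [← E.tsum_eq]
      calc ∑' p : γ × (Fin N → γ), ∏ i, f i (E p i)
          = ∑' p : γ × (Fin N → γ), f 0 p.1 * ∏ i : Fin N, f i.succ (p.2 i) := tsum_congr hprod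
        _ = (∑' x, f 0 x) * ∑' g : Fin N → γ, ∏ i, f i.succ (g i) :=
            (tsum_mul_tsum_of_summable_norm (hf 0) IHs).symm
        _ = ∏ i, ∑' x, f i x := by rw [IHt, Fin.prod_univ_succ]

lemma S16.prod_neg_one_zpow {ι : Type*} (s : Finset ι) (f : ι → ℤ) :
    (∏ i ∈ s, (-1 : ℂ) ^ (f i)) = (-1 : ℂ) ^ (∑ i ∈ s, f i) := by
  classical
  induction s using Finset.induction with
  | empty => simp
  | insert _ _ h ih =>
    rw [Finset.prod_insert h, Finset.sum_insert h, ih, zpow_add₀ (by norm_num : (-1 : ℂ) ≠ 0)]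

lemma S16.zmod2_val_mul_self (v : ZMod 2) : ((v.val : ℤ)) * (v.val : ℤ) = (v.val : ℤ) := by
  have h := ZMod.val_lt v
  interval_cases hv : v.val <;> simp
set_option maxHeartbeats 3200000 in
/-- Let `𝒞 ⊆ (ℤ/2)^{2n}` be a doubly-even self-dual code with respect to `η` which is
F₄-even, `χ := (1/√2)·1_{2n}`, and `Λ₀, Λ₁` the `Z₂`-graded parts of `Λ(𝒞)`. Then for
every `τ` in the upper half-plane, `Θ_{Λ₀}(τ) = ½[W_𝒞({ψ⁺}) + W_𝒞({ψ⁻})]` and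
`Θ_{Λ₁}(τ) = ½[W_𝒞({ψ⁺}) − W_𝒞({ψ⁻})]`. -/
theorem statement16 {n : ℕ} (hn : 1 ≤ n)
    (C : Submodule (ZMod 2) (Fin n ⊕ Fin n → ZMod 2))
    (hde : isDoublyEven (C : Set (Fin n ⊕ Fin n → ZMod 2)))
    (hsd : (C : Set (Fin n ⊕ Fin n → ZMod 2)) = {v | ∀ c ∈ C, lorZmod v c = 0})
    (hf4 : isF4Even (C : Set (Fin n ⊕ Fin n → ZMod 2)))
    (τ : ℂ) (hτ : 0 < τ.im) :
    let χ : Fin n ⊕ Fin n → ℝ := fun _ => (Real.sqrt 2)⁻¹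
    let Λ := constrA 2 (C : Set (Fin n ⊕ Fin n → ZMod 2))
    thetaSet (lam0 Λ χ) τ =
        (cwe (C : Set (Fin n ⊕ Fin n → ZMod 2)) (fun a b => psiP2 a b τ)
          + cwe (C : Set (Fin n ⊕ Fin n → ZMod 2)) (fun a b => psiM2 a b τ)) / 2 ∧
      thetaSet (lam1 Λ χ) τ =
        (cwe (C : Set (Fin n ⊕ Fin n → ZMod 2)) (fun a b => psiP2 a b τ)
          - cwe (C : Set (Fin n ⊕ Fin n → ZMod 2)) (fun a b => psiM2 a b τ)) / 2 := by
  classical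
  intro χ Λ
  set CS : Set (Fin n ⊕ Fin n → ZMod 2) := (C : Set (Fin n ⊕ Fin n → ZMod 2)) with hCS
  have h2ne : Real.sqrt 2 ≠ 0 := by positivity
  have hmul : Real.sqrt 2 * Real.sqrt 2 = 2 := Real.mul_self_sqrt (by norm_num)
  have hχ : ∀ j : Fin n ⊕ Fin n, χ j = (Real.sqrt 2)⁻¹ := fun _ => rfl
  have hhalf : ∀ x : ℝ, (Real.sqrt 2)⁻¹ * (x / Real.sqrt 2) = x / 2 := by
    intro x
    calc (Real.sqrt 2)⁻¹ * (x / Real.sqrt 2)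
        = x * (Real.sqrt 2 * Real.sqrt 2)⁻¹ := by rw [mul_inv]; ring
      _ = x / 2 := by rw [hmul, div_eq_mul_inv]
  -- parametrization of the lattice
  set e : (↥CS × (Fin n → ℤ × ℤ)) → (Fin n ⊕ Fin n → ℝ) := fun p => Sum.elim
      (fun i => (((p.1.1 (Sum.inl i)).val : ℝ) + 2 * ((p.2 i).1 : ℝ)) / Real.sqrt 2)
      (fun i => (((p.1.1 (Sum.inr i)).val : ℝ) + 2 * ((p.2 i).2 : ℝ)) / Real.sqrt 2)
    with he_def
  set F : (Fin n ⊕ Fin n → ℝ) → ℂ := fun l =>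
      qpow τ ((∑ i : Fin n, (l (Sum.inl i) + l (Sum.inr i)) ^ 2) / 4) *
        qbarpow τ ((∑ i : Fin n, (l (Sum.inl i) - l (Sum.inr i)) ^ 2) / 4) with hF
  have hTheta : ∀ S : Set (Fin n ⊕ Fin n → ℝ), thetaSet S τ = ∑' l : S, F l.1 := fun _ => rfl
  -- injectivity of the parametrization
  have he : Function.Injective e := by
    rintro ⟨c, g⟩ ⟨c', g'⟩ h
    have hcoords : ∀ j : Fin n ⊕ Fin n, e (c, g) j = e (c', g') j := fun j => congrFun h j
    have hL : ∀ i : Fin n, c.1 (Sum.inl i) = c'.1 (Sum.inl i) ∧ (g i).1 = (g' i).1 := by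
      intro i
      have h0 := hcoords (Sum.inl i)
      simp only [he_def, Sum.elim_inl] at h0
      have h1 := congrArg (fun x : ℝ => x * Real.sqrt 2) h0
      simp only [div_mul_cancel₀ _ h2ne] at h1
      have h2 : ((c.1 (Sum.inl i)).val : ℤ) + 2 * (g i).1
          = ((c'.1 (Sum.inl i)).val : ℤ) + 2 * (g' i).1 := by exact_mod_cast h1
      have hv : (c.1 (Sum.inl i)).val < 2 := ZMod.val_lt _
      have hv' : (c'.1 (Sum.inl i)).val < 2 := ZMod.val_lt _
      have hveq : (c.1 (Sum.inl i)).val = (c'.1 (Sum.inl i)).val := by omega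
      exact ⟨ZMod.val_injective 2 hveq, by omega⟩
    have hR : ∀ i : Fin n, c.1 (Sum.inr i) = c'.1 (Sum.inr i) ∧ (g i).2 = (g' i).2 := by
      intro i
      have h0 := hcoords (Sum.inr i)
      simp only [he_def, Sum.elim_inr] at h0
      have h1 := congrArg (fun x : ℝ => x * Real.sqrt 2) h0
      simp only [div_mul_cancel₀ _ h2ne] at h1
      have h2 : ((c.1 (Sum.inr i)).val : ℤ) + 2 * (g i).2
          = ((c'.1 (Sum.inr i)).val : ℤ) + 2 * (g' i).2 := by exact_mod_cast h1
      have hv : (c.1 (Sum.inr i)).val < 2 := ZMod.val_lt _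
      have hv' : (c'.1 (Sum.inr i)).val < 2 := ZMod.val_lt _
      have hveq : (c.1 (Sum.inr i)).val = (c'.1 (Sum.inr i)).val := by omega
      exact ⟨ZMod.val_injective 2 hveq, by omega⟩
    have hc : c = c' := Subtype.ext (funext fun j => by
      cases j with
      | inl i => exact (hL i).1
      | inr i => exact (hR i).1)
    have hg : g = g' := funext fun i => Prod.ext (hL i).2 (hR i).2
    simp [hc, hg]
  -- the range of the parametrization is the lattice
  have hrange : Set.range e = Λ := by
    ext x
    constructor
    · rintro ⟨⟨c, g⟩, rfl⟩
      show ∃ c0 ∈ CS, ∃ m : Fin n ⊕ Fin n → ℤ,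
        e (c, g) = fun i => (liftR c0 i + ((2 : ℕ) : ℝ) * ((m i : ℤ) : ℝ)) / Real.sqrt ((2 : ℕ) : ℝ)
      refine ⟨c.1, c.2, Sum.elim (fun i => (g i).1) (fun i => (g i).2), ?_⟩
      funext j
      cases j with
      | inl i =>
        simp only [he_def, Sum.elim_inl, liftR]
        norm_num
      | inr i =>
        simp only [he_def, Sum.elim_inr, liftR]
        norm_num
    · intro hx
      obtain ⟨c0, hc0, m, rfl⟩ := (hx : ∃ c0 ∈ CS, ∃ m : Fin n ⊕ Fin n → ℤ,
        x = fun i => (liftR c0 i + ((2 : ℕ) : ℝ) * ((m i : ℤ) : ℝ)) / Real.sqrt ((2 : ℕ) : ℝ))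
      refine ⟨⟨⟨c0, hc0⟩, fun i => (m (Sum.inl i), m (Sum.inr i))⟩, ?_⟩
      funext j
      cases j with
      | inl i =>
        simp only [he_def, Sum.elim_inl, liftR]
        norm_num
      | inr i =>
        simp only [he_def, Sum.elim_inr, liftR]
        norm_num
  -- evenness of the coordinate sums of codewords
  have key_even : ∀ c : ↥CS, ∃ k : ℤ,
      (∑ i : Fin n, (((c.1 (Sum.inl i)).val : ℤ) + ((c.1 (Sum.inr i)).val : ℤ))) = 2 * k := by
    intro c
    obtain ⟨s1, hs1⟩ := hf4 c.1 c.2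
    obtain ⟨s2, hs2⟩ := hde c.1 c.2
    have hsplit1 : (∑ i : Fin n, (((c.1 (Sum.inl i)).val : ℤ) * ((c.1 (Sum.inl i)).val : ℤ)
        + ((c.1 (Sum.inr i)).val : ℤ) * ((c.1 (Sum.inr i)).val : ℤ)
        - ((c.1 (Sum.inl i)).val : ℤ) * ((c.1 (Sum.inr i)).val : ℤ)))
        = (∑ i : Fin n, (((c.1 (Sum.inl i)).val : ℤ) + ((c.1 (Sum.inr i)).val : ℤ)))
          - ∑ i : Fin n, ((c.1 (Sum.inl i)).val : ℤ) * ((c.1 (Sum.inr i)).val : ℤ) := by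
      rw [← Finset.sum_sub_distrib]
      refine Finset.sum_congr rfl fun i _ => ?_
      rw [S16.zmod2_val_mul_self, S16.zmod2_val_mul_self]
    have hsplit2 : (∑ i : Fin n, (((c.1 (Sum.inl i)).val : ℤ) * ((c.1 (Sum.inr i)).val : ℤ)
        + ((c.1 (Sum.inr i)).val : ℤ) * ((c.1 (Sum.inl i)).val : ℤ)))
        = 2 * ∑ i : Fin n, ((c.1 (Sum.inl i)).val : ℤ) * ((c.1 (Sum.inr i)).val : ℤ) := by
      rw [Finset.mul_sum]
      exact Finset.sum_congr rfl fun i _ => by ring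
    rw [hsplit1] at hs1
    rw [hsplit2] at hs2
    exact ⟨s1 + s2, by omega⟩
  choose K hK using key_even
  set N : ↥CS × (Fin n → ℤ × ℤ) → ℤ :=
    fun p => K p.1 + ∑ i : Fin n, ((p.2 i).1 + (p.2 i).2) with hN
  -- the grading function
  have hlor : ∀ p : ↥CS × (Fin n → ℤ × ℤ), lorR χ (e p) = ((N p : ℤ) : ℝ) := by
    rintro ⟨c, g⟩
    have hterm : ∀ i : Fin n,
        χ (Sum.inl i) * e (c, g) (Sum.inr i) + χ (Sum.inr i) * e (c, g) (Sum.inl i)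
        = ((((c.1 (Sum.inl i)).val : ℤ) + ((c.1 (Sum.inr i)).val : ℤ)
            + 2 * (g i).1 + 2 * (g i).2 : ℤ) : ℝ) / 2 := by
      intro i
      simp only [he_def, Sum.elim_inl, Sum.elim_inr]
      rw [hhalf, hhalf, ← add_div]
      push_cast
      ring
    have hNs : (∑ i : Fin n, (((c.1 (Sum.inl i)).val : ℤ) + ((c.1 (Sum.inr i)).val : ℤ)
        + 2 * (g i).1 + 2 * (g i).2)) = 2 * N (c, g) := by
      have hterm2 : ∀ i : Fin n, (((c.1 (Sum.inl i)).val : ℤ) + ((c.1 (Sum.inr i)).val : ℤ)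
          + 2 * (g i).1 + 2 * (g i).2)
          = ((((c.1 (Sum.inl i)).val : ℤ) + ((c.1 (Sum.inr i)).val : ℤ))
            + 2 * ((g i).1 + (g i).2)) := fun i => by ring
      rw [Finset.sum_congr rfl fun i _ => hterm2 i, Finset.sum_add_distrib, hK c,
        ← Finset.mul_sum]
      simp only [hN]
      ring
    simp only [lorR, hχ]
    rw [Finset.sum_congr rfl fun i _ => hterm i, ← Finset.sum_div, ← Int.cast_sum, hNs]
    push_cast
    ring
  -- the theta integrand factorizes over coordinates
  have hFe : ∀ p : ↥CS × (Fin n → ℤ × ℤ),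
      F (e p) = ∏ i : Fin n, S16.Tc τ (p.1.1 (Sum.inl i)) (p.1.1 (Sum.inr i)) (p.2 i) := by
    rintro ⟨c, g⟩
    have hq : (∑ i : Fin n, (e (c, g) (Sum.inl i) + e (c, g) (Sum.inr i)) ^ 2) / 4
        = ∑ i : Fin n, (((c.1 (Sum.inl i)).val : ℝ) + ((c.1 (Sum.inr i)).val : ℝ)
            + 2 * ((g i).1 : ℝ) + 2 * ((g i).2 : ℝ)) ^ 2 / 8 := by
      rw [Finset.sum_div]
      refine Finset.sum_congr rfl fun i _ => ?_
      simp only [he_def, Sum.elim_inl, Sum.elim_inr]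
      rw [← add_div, div_pow, Real.sq_sqrt (by norm_num : (0 : ℝ) ≤ 2)]
      ring
    have hqb : (∑ i : Fin n, (e (c, g) (Sum.inl i) - e (c, g) (Sum.inr i)) ^ 2) / 4
        = ∑ i : Fin n, (((c.1 (Sum.inl i)).val : ℝ) - ((c.1 (Sum.inr i)).val : ℝ)
            + 2 * ((g i).1 : ℝ) - 2 * ((g i).2 : ℝ)) ^ 2 / 8 := by
      rw [Finset.sum_div]
      refine Finset.sum_congr rfl fun i _ => ?_
      simp only [he_def, Sum.elim_inl, Sum.elim_inr]
      rw [div_sub_div_same, div_pow, Real.sq_sqrt (by norm_num : (0 : ℝ) ≤ 2)]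
      ring
    simp only [hF]
    rw [hq, hqb, S16.qpow_sum, S16.qbarpow_sum, ← Finset.prod_mul_distrib]
    rfl
  -- the signed theta integrand factorizes over coordinates
  have hEfac : ∀ c : ↥CS, (∏ i : Fin n, Complex.exp (Real.pi * Complex.I *
        (((c.1 (Sum.inl i)).val : ℝ) + ((c.1 (Sum.inr i)).val : ℝ)) / 2))
      = (-1 : ℂ) ^ (K c) := by
    intro c
    rw [← Complex.exp_sum]
    have hsum2 : (∑ i : Fin n, ((((c.1 (Sum.inl i)).val : ℤ) : ℂ)
        + (((c.1 (Sum.inr i)).val : ℤ) : ℂ))) = 2 * ((K c : ℤ) : ℂ) := by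
      have h := hK c
      have h2 : ((∑ i : Fin n, (((c.1 (Sum.inl i)).val : ℤ)
          + ((c.1 (Sum.inr i)).val : ℤ)) : ℤ) : ℂ) = ((2 * K c : ℤ) : ℂ) := by
        exact_mod_cast congrArg (fun z : ℤ => (z : ℂ)) h
      push_cast at h2 ⊢
      exact h2
    have harg : (∑ i : Fin n, (Real.pi * Complex.I *
        (((c.1 (Sum.inl i)).val : ℝ) + ((c.1 (Sum.inr i)).val : ℝ)) / 2 : ℂ))
        = ((K c : ℤ) : ℂ) * (Real.pi * Complex.I) := by
      calc (∑ i : Fin n, (Real.pi * Complex.I *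
          (((c.1 (Sum.inl i)).val : ℝ) + ((c.1 (Sum.inr i)).val : ℝ)) / 2 : ℂ))
          = (Real.pi * Complex.I / 2) * (∑ i : Fin n, ((((c.1 (Sum.inl i)).val : ℤ) : ℂ)
            + (((c.1 (Sum.inr i)).val : ℤ) : ℂ))) := by
            rw [Finset.mul_sum]
            refine Finset.sum_congr rfl fun i _ => ?_
            push_cast
            ring
        _ = ((K c : ℤ) : ℂ) * (Real.pi * Complex.I) := by rw [hsum2]; ring
    rw [harg, Complex.exp_int_mul, Complex.exp_pi_mul_I]
  have hGe : ∀ p : ↥CS × (Fin n → ℤ × ℤ),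
      (-1 : ℂ) ^ (N p) * F (e p)
        = ∏ i : Fin n, S16.Tm τ (p.1.1 (Sum.inl i)) (p.1.1 (Sum.inr i)) (p.2 i) := by
    rintro ⟨c, g⟩
    have hTmsplit : (∏ i : Fin n, S16.Tm τ (c.1 (Sum.inl i)) (c.1 (Sum.inr i)) (g i))
        = (∏ i : Fin n, Complex.exp (Real.pi * Complex.I *
            (((c.1 (Sum.inl i)).val : ℝ) + ((c.1 (Sum.inr i)).val : ℝ)) / 2))
          * ((∏ i : Fin n, (-1 : ℂ) ^ ((g i).1 + (g i).2))
            * ∏ i : Fin n, S16.Tc τ (c.1 (Sum.inl i)) (c.1 (Sum.inr i)) (g i)) := by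
      rw [← Finset.prod_mul_distrib, ← Finset.prod_mul_distrib]
      exact Finset.prod_congr rfl fun i _ => rfl
    rw [hTmsplit, hEfac c, S16.prod_neg_one_zpow, ← hFe (c, g)]
    simp only [hN]
    rw [zpow_add₀ (by norm_num : (-1 : ℂ) ≠ 0), mul_assoc]
  -- summability
  have hTcpi : ∀ c : ↥CS,
      (Summable fun g : Fin n → ℤ × ℤ =>
        ‖∏ i : Fin n, S16.Tc τ (c.1 (Sum.inl i)) (c.1 (Sum.inr i)) (g i)‖) ∧
      ((∑' g : Fin n → ℤ × ℤ, ∏ i : Fin n, S16.Tc τ (c.1 (Sum.inl i)) (c.1 (Sum.inr i)) (g i))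
        = ∏ i : Fin n, ∑' x : ℤ × ℤ, S16.Tc τ (c.1 (Sum.inl i)) (c.1 (Sum.inr i)) x) :=
    fun c => S16.pi_tsum_prod n (fun i => S16.Tc τ (c.1 (Sum.inl i)) (c.1 (Sum.inr i)))
      (fun i => S16.summable_norm_Tc hτ _ _)
  have hTmpi : ∀ c : ↥CS,
      (Summable fun g : Fin n → ℤ × ℤ =>
        ‖∏ i : Fin n, S16.Tm τ (c.1 (Sum.inl i)) (c.1 (Sum.inr i)) (g i)‖) ∧
      ((∑' g : Fin n → ℤ × ℤ, ∏ i : Fin n, S16.Tm τ (c.1 (Sum.inl i)) (c.1 (Sum.inr i)) (g i))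
        = ∏ i : Fin n, ∑' x : ℤ × ℤ, S16.Tm τ (c.1 (Sum.inl i)) (c.1 (Sum.inr i)) x) :=
    fun c => S16.pi_tsum_prod n (fun i => S16.Tm τ (c.1 (Sum.inl i)) (c.1 (Sum.inr i)))
      (fun i => S16.summable_norm_Tm hτ _ _)
  have hFnormS : Summable fun p : ↥CS × (Fin n → ℤ × ℤ) => ‖F (e p)‖ := by
    refine (summable_prod_of_nonneg fun p => norm_nonneg _).mpr ⟨?_, ?_⟩
    · intro c
      exact ((hTcpi c).1).congr fun g => (congrArg norm (hFe (c, g))).symm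
    · exact Summable.of_finite
  have hFS : Summable fun p : ↥CS × (Fin n → ℤ × ℤ) => F (e p) := hFnormS.of_norm
  have hMnormS : Summable fun p : ↥CS × (Fin n → ℤ × ℤ) => ‖(-1 : ℂ) ^ (N p) * F (e p)‖ := by
    refine hFnormS.congr fun p => ?_
    simp only [norm_mul, norm_zpow, norm_neg, norm_one, one_zpow, one_mul]
  have hMS : Summable fun p : ↥CS × (Fin n → ℤ × ℤ) => (-1 : ℂ) ^ (N p) * F (e p) :=
    hMnormS.of_norm
  have hsliceF : ∀ c : ↥CS, Summable fun g : Fin n → ℤ × ℤ => F (e (c, g)) := fun c =>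
    ((hTcpi c).1.of_norm).congr fun g => (hFe (c, g)).symm
  have hsliceM : ∀ c : ↥CS,
      Summable fun g : Fin n → ℤ × ℤ => (-1 : ℂ) ^ (N (c, g)) * F (e (c, g)) := fun c =>
    ((hTmpi c).1.of_norm).congr fun g => (hGe (c, g)).symm
  -- the two weight-enumerator identities
  have hP : (∑' p : ↥CS × (Fin n → ℤ × ℤ), F (e p))
      = cwe CS (fun a b => psiP2 a b τ) := by
    rw [Summable.tsum_prod' hFS hsliceF]
    rw [show cwe CS (fun a b => psiP2 a b τ)
      = ∑' c : ↥CS, ∏ i : Fin n, psiP2 (c.1 (Sum.inl i)) (c.1 (Sum.inr i)) τ from rfl]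
    refine tsum_congr fun c => ?_
    rw [tsum_congr fun g => hFe (c, g), (hTcpi c).2]
    exact Finset.prod_congr rfl fun i _ => S16.tsum_Tc hτ _ _
  have hM : (∑' p : ↥CS × (Fin n → ℤ × ℤ), (-1 : ℂ) ^ (N p) * F (e p))
      = cwe CS (fun a b => psiM2 a b τ) := by
    rw [Summable.tsum_prod' hMS hsliceM]
    rw [show cwe CS (fun a b => psiM2 a b τ)
      = ∑' c : ↥CS, ∏ i : Fin n, psiM2 (c.1 (Sum.inl i)) (c.1 (Sum.inr i)) τ from rfl]
    refine tsum_congr fun c => ?_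
    rw [tsum_congr fun g => hGe (c, g), (hTmpi c).2]
    exact Finset.prod_congr rfl fun i _ => S16.tsum_Tm hτ _ _
  -- identification of the graded pieces
  have hlam0 : lam0 Λ χ = e '' {p | Even (N p)} := by
    ext l
    constructor
    · intro hl0
      obtain ⟨hl, k, hk⟩ := (hl0 : l ∈ Λ ∧ ∃ k : ℤ, lorR χ l = 2 * (k : ℝ))
      rw [← hrange] at hl
      obtain ⟨p, rfl⟩ := hl
      rw [hlor p] at hk
      have hNp : N p = 2 * k := by exact_mod_cast hk
      exact ⟨p, ⟨k, by omega⟩, rfl⟩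
    · rintro ⟨p, hp, rfl⟩
      obtain ⟨k, hk⟩ := hp
      refine (⟨hrange ▸ Set.mem_range_self p, k, ?_⟩ :
        e p ∈ Λ ∧ ∃ k : ℤ, lorR χ (e p) = 2 * (k : ℝ))
      rw [hlor p, hk]
      push_cast
      ring
  have hlam1 : lam1 Λ χ = e '' {p | Odd (N p)} := by
    ext l
    constructor
    · intro hl0
      obtain ⟨hl, k, hk⟩ := (hl0 : l ∈ Λ ∧ ∃ k : ℤ, lorR χ l = 2 * (k : ℝ) + 1)
      rw [← hrange] at hl
      obtain ⟨p, rfl⟩ := hl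
      rw [hlor p] at hk
      have hNp : N p = 2 * k + 1 := by exact_mod_cast hk
      exact ⟨p, ⟨k, by omega⟩, rfl⟩
    · rintro ⟨p, hp, rfl⟩
      obtain ⟨k, hk⟩ := hp
      refine (⟨hrange ▸ Set.mem_range_self p, k, ?_⟩ :
        e p ∈ Λ ∧ ∃ k : ℤ, lorR χ (e p) = 2 * (k : ℝ) + 1)
      rw [hlor p, hk]
      push_cast
      ring
  -- final assembly
  have h0 : thetaSet (lam0 Λ χ) τ
      = ((∑' p : ↥CS × (Fin n → ℤ × ℤ), F (e p))
        + ∑' p : ↥CS × (Fin n → ℤ × ℤ), (-1 : ℂ) ^ (N p) * F (e p)) / 2 := by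
    rw [hTheta, hlam0, tsum_image F he.injOn,
      tsum_subtype {p | Even (N p)} fun p => F (e p)]
    have hpt : ∀ p : ↥CS × (Fin n → ℤ × ℤ),
        Set.indicator {p | Even (N p)} (fun p => F (e p)) p
          = (F (e p) + (-1 : ℂ) ^ (N p) * F (e p)) / 2 := by
      intro p
      by_cases hp : Even (N p)
      · rw [Set.indicator_of_mem (show p ∈ {p | Even (N p)} from hp),
          Even.neg_one_zpow hp, one_mul]
        ring
      · rw [Set.indicator_of_notMem (show p ∉ {p | Even (N p)} from hp),
          Odd.neg_one_zpow (Int.not_even_iff_odd.mp hp), neg_one_mul]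
        ring
    rw [tsum_congr hpt, tsum_div_const, Summable.tsum_add hFS hMS]
  have h1 : thetaSet (lam1 Λ χ) τ
      = ((∑' p : ↥CS × (Fin n → ℤ × ℤ), F (e p))
        - ∑' p : ↥CS × (Fin n → ℤ × ℤ), (-1 : ℂ) ^ (N p) * F (e p)) / 2 := by
    rw [hTheta, hlam1, tsum_image F he.injOn,
      tsum_subtype {p | Odd (N p)} fun p => F (e p)]
    have hpt : ∀ p : ↥CS × (Fin n → ℤ × ℤ),
        Set.indicator {p | Odd (N p)} (fun p => F (e p)) p
          = (F (e p) - (-1 : ℂ) ^ (N p) * F (e p)) / 2 := by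
      intro p
      by_cases hp : Odd (N p)
      · rw [Set.indicator_of_mem (show p ∈ {p | Odd (N p)} from hp),
          Odd.neg_one_zpow hp, neg_one_mul]
        ring
      · rw [Set.indicator_of_notMem (show p ∉ {p | Odd (N p)} from hp),
          Even.neg_one_zpow (Int.not_odd_iff_even.mp hp), one_mul]
        ring
    rw [tsum_congr hpt, tsum_div_const, Summable.tsum_sub hFS hMS]
  exact ⟨by rw [h0, hP, hM], by rw [h1, hP, hM]⟩
end
end
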